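/- arXiv:2605.26815 — 9 statements merged into one kernel-verified Lean document; each statement's English description precedes it below -/
import Mathlib

section
/- For all c ≥ 1 and k_1,...,k_c ≥ 2, the mixed vertex-coprime Ramsey number satisfies R_cop(k_1,...,k_c) = p_M where M = Σ_{i=1}^c (k_i − 1) and p_M is the M-th prime. -/
/-!
The numbers `1, p_1, …, p_M` are `M + 1` pairwise coprime integers in `[1, p_M]`, so by
pigeonhole some colour `i` receives `k_i` of them. Conversely, for `n < p_M` give `1` a slot of
its own and every `a ≥ 2` the slot of its least prime factor, one of `p_1, …, p_{M-1}`: distinct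
coprime integers get distinct slots. Handing `k_i - 1` of the `M` slots to colour `i` and colouring
each integer by its slot, no colour class contains `k_i` pairwise coprime integers.
-/

open Finset Nat

theorem exists_monochromatic_subset_of_sum_lt_card {α ι : Type*} [Fintype ι] [DecidableEq ι]
    (T : Finset α) (χ : α → ι) (k : ι → ℕ) (h : ∑ i, (k i - 1) < #T) :
    ∃ i, ∃ S ⊆ T, (∀ a ∈ S, χ a = i) ∧ #S = k i := by
  rw [card_eq_sum_card_fiberwise fun a _ => mem_univ (χ a)] at h
  obtain ⟨i, -, hi⟩ := exists_lt_of_sum_lt h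
  obtain ⟨S, hST, hS⟩ := exists_subset_card_eq (show k i ≤ #{a ∈ T | χ a = i} by omega)
  exact ⟨i, S, hST.trans (filter_subset _ _), fun a ha => (mem_filter.1 (hST ha)).2, hS⟩

theorem card_filter_sigma_fst_eq {c : ℕ} (n : Fin c → ℕ) (i : Fin c) :
    #{p : (j : Fin c) × Fin (n j) | p.1 = i} = n i := by
  rw [show ({p : (j : Fin c) × Fin (n j) | p.1 = i} : Finset _) = ({i} : Finset _).sigma
    fun _ => univ by ext; simp, card_sigma]
  simp

theorem exists_coloring_card_le_of_injOn {α : Type*} {c : ℕ} (n : Fin c → ℕ)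
    (f : α → Fin (∑ i, n i)) :
    ∃ χ : α → Fin c, ∀ i (S : Finset α), Set.InjOn f S → (∀ a ∈ S, χ a = i) → #S ≤ n i := by
  refine ⟨fun a => (finSigmaFinEquiv.symm (f a)).1, fun i S hf hS => ?_⟩
  rw [← card_filter_sigma_fst_eq n i]
  refine card_le_card_of_injOn (finSigmaFinEquiv.symm ∘ f) (fun a ha => ?_)
    (finSigmaFinEquiv.symm.injective.comp_injOn hf)
  simpa using hS a ha

theorem pairwise_coprime_of_forall_eq_one_or_prime {s : Set ℕ}
    (hs : ∀ a ∈ s, a = 1 ∨ a.Prime) : s.Pairwise Nat.Coprime := by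
  intro a ha b hb hab
  rcases hs a ha with rfl | hpa
  · exact coprime_one_left b
  rcases hs b hb with rfl | hpb
  · exact coprime_one_right a
  exact (coprime_primes hpa hpb).2 hab

noncomputable def primesWithOne (M : ℕ) : Finset ℕ := insert 1 ((range M).image (nth Nat.Prime))

theorem mem_primesWithOne {M a : ℕ} :
    a ∈ primesWithOne M ↔ a = 1 ∨ ∃ j < M, nth Nat.Prime j = a := by
  simp [primesWithOne]

theorem card_primesWithOne (M : ℕ) : #(primesWithOne M) = M + 1 := by
  rw [primesWithOne, card_insert_of_notMem, card_image_of_injective _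
    (nth_injective infinite_setOfPred_prime), card_range]
  simp only [mem_image, not_exists, not_and]
  exact fun j _ hj => (prime_nth_prime j).one_lt.ne' hj

theorem primesWithOne_subset_Icc (N : ℕ) :
    ↑(primesWithOne (N + 1)) ⊆ Set.Icc 1 (nth Nat.Prime N) := by
  intro a ha
  rcases mem_primesWithOne.1 ha with rfl | ⟨j, hj, rfl⟩
  · exact ⟨le_rfl, (prime_nth_prime N).one_lt.le⟩
  · exact ⟨(prime_nth_prime j).one_lt.le, (nth_le_nth infinite_setOfPred_prime).2 (by omega)⟩

theorem pairwise_coprime_primesWithOne (M : ℕ) :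
    (primesWithOne M : Set ℕ).Pairwise Nat.Coprime := by
  refine pairwise_coprime_of_forall_eq_one_or_prime fun a ha => ?_
  rcases mem_primesWithOne.1 ha with rfl | ⟨j, -, rfl⟩
  exacts [Or.inl rfl, Or.inr (prime_nth_prime j)]

theorem count_prime_minFac_lt {a N : ℕ} (ha : 1 < a) (haN : a < nth Nat.Prime N) :
    count Nat.Prime a.minFac < N := by
  rw [← count_nth_of_infinite infinite_setOfPred_prime N]
  exact count_strict_mono (minFac_prime ha.ne') ((minFac_le (by omega)).trans_lt haN)

theorem Nat.Coprime.minFac_ne {a b : ℕ} (h : Nat.Coprime a b) (ha : a ≠ 1) :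
    a.minFac ≠ b.minFac := fun hab =>
  (minFac_prime ha).ne_one (eq_one_of_dvd_coprimes h (minFac_dvd a) (hab ▸ minFac_dvd b))

-- `Fin.ofNat` wraps around only for `a ≥ nth Nat.Prime N`, where the slot is never used.
def coprimeSlot (N a : ℕ) : Fin (N + 1) :=
  if a = 1 then Fin.last N else Fin.ofNat (N + 1) (count Nat.Prime a.minFac)

theorem val_coprimeSlot {N a : ℕ} (ha : 1 < a) (haN : a < nth Nat.Prime N) :
    (coprimeSlot N a : ℕ) = count Nat.Prime a.minFac := by
  rw [coprimeSlot, if_neg ha.ne', Fin.val_ofNat]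
  exact Nat.mod_eq_of_lt (by have := count_prime_minFac_lt ha haN; omega)

theorem coprimeSlot_ne_last {N a : ℕ} (ha : 1 < a) (haN : a < nth Nat.Prime N) :
    coprimeSlot N a ≠ Fin.last N := fun h => by
  have := count_prime_minFac_lt ha haN
  rw [← val_coprimeSlot ha haN, h, Fin.val_last] at this
  omega

theorem injOn_coprimeSlot {N : ℕ} {S : Set ℕ} (hS : S ⊆ Set.Ioo 0 (nth Nat.Prime N))
    (hcop : S.Pairwise Nat.Coprime) : S.InjOn (coprimeSlot N) := by
  have h1 : coprimeSlot N 1 = Fin.last N := if_pos rfl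
  have hgt : ∀ x ∈ S, x ≠ 1 → 1 < x := fun x hx hx1 => by have := (hS hx).1; omega
  intro a ha b hb hab
  by_contra hne
  rcases eq_or_ne a 1 with rfl | ha1
  · exact coprimeSlot_ne_last (hgt b hb (Ne.symm hne)) (hS hb).2 (hab.symm.trans h1)
  rcases eq_or_ne b 1 with rfl | hb1
  · exact coprimeSlot_ne_last (hgt a ha ha1) (hS ha).2 (hab.trans h1)
  refine (hcop ha hb hne).minFac_ne ha1 ?_
  have hcount : count Nat.Prime a.minFac = count Nat.Prime b.minFac := by
    rw [← val_coprimeSlot (hgt a ha ha1) (hS ha).2, ← val_coprimeSlot (hgt b hb hb1) (hS hb).2,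
      hab]
  rw [← nth_count (minFac_prime ha1), hcount, nth_count (minFac_prime hb1)]

/-- The mixed vertex-coprime Ramsey number: the least `n` such that every `c`-coloring
of `{1,...,n}` has a color `i` whose class contains `k i` pairwise coprime integers
equals the `M`-th prime, where `M = ∑ i, (k i - 1)` (primes are 1-indexed, so the
`M`-th prime is `Nat.nth Nat.Prime (M - 1)`). -/
theorem vertex_coprime_ramsey (c : ℕ) (hc : 1 ≤ c) (k : Fin c → ℕ)
    (hk : ∀ i, 2 ≤ k i) :
    IsLeast {n : ℕ | ∀ χ : ℕ → Fin c, ∃ i : Fin c, ∃ S : Finset ℕ,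
      ↑S ⊆ Set.Icc 1 n ∧ (∀ a ∈ S, χ a = i) ∧
      (S : Set ℕ).Pairwise Nat.Coprime ∧ S.card = k i}
    (Nat.nth Nat.Prime (∑ i, (k i - 1) - 1)) := by
  have : NeZero c := ⟨by omega⟩
  have hpos : 0 < ∑ i, (k i - 1) := sum_pos (fun i _ => by have := hk i; omega) univ_nonempty
  obtain ⟨N, hN⟩ := Nat.exists_eq_add_one.2 hpos
  rw [hN, Nat.add_sub_cancel]
  refine ⟨fun χ => ?_, fun n hn => ?_⟩
  · obtain ⟨i, S, hST, hSχ, hS⟩ := exists_monochromatic_subset_of_sum_lt_card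
      (primesWithOne (N + 1)) χ k (by rw [hN, card_primesWithOne]; omega)
    exact ⟨i, S, (coe_subset.2 hST).trans (primesWithOne_subset_Icc N), hSχ,
      (pairwise_coprime_primesWithOne _).mono (coe_subset.2 hST), hS⟩
  · by_contra! hlt
    obtain ⟨χ, hχ⟩ := exists_coloring_card_le_of_injOn (fun i => k i - 1)
      (Fin.cast hN.symm ∘ coprimeSlot N)
    obtain ⟨i, S, hSn, hSχ, hcop, hS⟩ := hn χ
    have hinj : Set.InjOn (coprimeSlot N) S :=
      injOn_coprimeSlot (fun a ha => ⟨(hSn ha).1, (hSn ha).2.trans_lt hlt⟩) hcop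
    have := hχ i S ((Fin.cast_injective _).comp_injOn hinj) hSχ
    have := hk i
    omega
end

section
/- If n = p_M where M = Σ_{i=1}^c (k_i − 1), then every c-coloring of {1,...,n} has some color class containing k_i pairwise coprime integers for the corresponding color i. -/
/-!
The number `1` and the first `M` primes are `M + 1` pairwise coprime integers in `[1, p_M]`.
A colouring of them in which colour `i` is used at most `k i - 1` times covers at most
`∑ i, (k i - 1) = M` of them, so by pigeonhole some colour `i` occurs on `k i` of them, and
these are pairwise coprime.
-/

open Finset

theorem Finset.exists_subset_card_eq_of_sum_pred_lt_card {α ι : Type*} [Fintype ι]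
    [DecidableEq ι] (T : Finset α) (χ : α → ι) (k : ι → ℕ) (hT : ∑ i, (k i - 1) < T.card) :
    ∃ i, ∃ S ⊆ T, (∀ a ∈ S, χ a = i) ∧ S.card = k i := by
  obtain ⟨i, hi⟩ : ∃ i, k i ≤ #{a ∈ T | χ a = i} := by
    by_contra! h
    have hfibers : ∑ i, #{a ∈ T | χ a = i} ≤ ∑ i, (k i - 1) :=
      sum_le_sum fun i _ => Nat.le_pred_of_lt (h i)
    rw [← card_eq_sum_card_fiberwise fun a _ => mem_univ (χ a)] at hfibers
    omega
  obtain ⟨S, hS, hScard⟩ := exists_subset_card_eq hi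
  exact ⟨i, S, hS.trans (filter_subset _ _), fun a ha => (mem_filter.mp (hS ha)).2, hScard⟩

noncomputable def oneAndFirstPrimes (M : ℕ) : Finset ℕ :=
  insert 1 ((range M).image (Nat.nth Nat.Prime))

theorem card_oneAndFirstPrimes (M : ℕ) : (oneAndFirstPrimes M).card = M + 1 := by
  have h1 : 1 ∉ (range M).image (Nat.nth Nat.Prime) := by
    simp only [mem_image, not_exists, not_and]
    exact fun j _ h => (Nat.prime_nth_prime j).ne_one h
  rw [oneAndFirstPrimes, card_insert_of_notMem h1,
    card_image_of_injective _ (Nat.nth_injective Nat.infinite_setOfPred_prime), card_range]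

theorem pairwise_coprime_oneAndFirstPrimes (M : ℕ) :
    (oneAndFirstPrimes M : Set ℕ).Pairwise Nat.Coprime := by
  intro a ha b hb hab
  simp only [oneAndFirstPrimes, coe_insert, coe_image, Set.mem_insert_iff, Set.mem_image]
    at ha hb
  rcases ha with rfl | ⟨j, -, rfl⟩
  · exact Nat.coprime_one_left _
  rcases hb with rfl | ⟨l, -, rfl⟩
  · exact Nat.coprime_one_right _
  exact (Nat.coprime_primes (Nat.prime_nth_prime j) (Nat.prime_nth_prime l)).mpr hab

theorem oneAndFirstPrimes_subset_Icc (M : ℕ) :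
    (oneAndFirstPrimes M : Set ℕ) ⊆ Set.Icc 1 (Nat.nth Nat.Prime (M - 1)) := by
  intro a ha
  simp only [oneAndFirstPrimes, coe_insert, coe_image, Set.mem_insert_iff, Set.mem_image,
    coe_range, Set.mem_Iio] at ha
  rcases ha with rfl | ⟨j, hj, rfl⟩
  · exact ⟨le_rfl, (Nat.prime_nth_prime _).one_le⟩
  · refine ⟨(Nat.prime_nth_prime j).one_le, ?_⟩
    exact (Nat.nth_le_nth Nat.infinite_setOfPred_prime).mpr (by omega)

theorem vertex_coprime_ramsey_upper_general (c : ℕ) (k : Fin c → ℕ)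
    (n : ℕ)
    (hn : n = Nat.nth Nat.Prime (∑ i, (k i - 1) - 1)) (χ : ℕ → Fin c) :
    ∃ i : Fin c, ∃ S : Finset ℕ, ↑S ⊆ Set.Icc 1 n ∧ (∀ a ∈ S, χ a = i) ∧
      (S : Set ℕ).Pairwise Nat.Coprime ∧ S.card = k i := by
  set M := ∑ i, (k i - 1)
  obtain ⟨i, S, hST, hχ, hcard⟩ := (oneAndFirstPrimes M).exists_subset_card_eq_of_sum_pred_lt_card
    χ k (by rw [card_oneAndFirstPrimes]; omega)
  refine ⟨i, S, ?_, hχ, (pairwise_coprime_oneAndFirstPrimes M).mono (coe_subset.mpr hST), hcard⟩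
  rw [hn]
  exact (coe_subset.mpr hST).trans (oneAndFirstPrimes_subset_Icc M)

/-- Upper-bound direction: at `n = p_M` with `M = ∑ (k i - 1)`, every `c`-coloring of
`{1,...,n}` has some color class containing `k i` pairwise coprime integers. -/
theorem vertex_coprime_ramsey_upper (c : ℕ) (hc : 1 ≤ c) (k : Fin c → ℕ)
    (hk : ∀ i, 2 ≤ k i) (n : ℕ)
    (hn : n = Nat.nth Nat.Prime (∑ i, (k i - 1) - 1)) (χ : ℕ → Fin c) :
    ∃ i : Fin c, ∃ S : Finset ℕ, ↑S ⊆ Set.Icc 1 n ∧ (∀ a ∈ S, χ a = i) ∧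
      (S : Set ℕ).Pairwise Nat.Coprime ∧ S.card = k i :=
  vertex_coprime_ramsey_upper_general c k n hn χ
end

section
/- If n < p_M where M = Σ_{i=1}^c (k_i − 1) with k_1,...,k_c ≥ 2, then there exists a c-coloring of {1,...,n} such that for every color i, the color class contains no k_i pairwise coprime integers. -/
/-!
Since `Nat.minFac 1 = 1`, the map `Nat.minFac` is injective on every pairwise coprime set, and it
sends `{1, …, n}` into `{1} ∪ {primes ≤ n}`, a set of at most `π n + 1 ≤ M` elements. Distribute
that set into bins of sizes `k i - 1` and colour `m` by the bin of `Nat.minFac m`: a pairwise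
coprime colour class injects into its bin, so it has fewer than `k i` elements.
-/

open Finset

theorem Finset.exists_forall_card_fiber_le_of_card_le_sum {α ι : Type*} [Fintype ι]
    [DecidableEq ι] [Nonempty ι] (s : Finset α) (cap : ι → ℕ) (hs : #s ≤ ∑ i, cap i) :
    ∃ g : α → ι, ∀ i, #{a ∈ s | g a = i} ≤ cap i := by
  let slots : Finset (Σ _ : ι, ℕ) := univ.sigma fun i => range (cap i)
  have hcard : (s : Set α).encard ≤ (slots : Set (Σ _ : ι, ℕ)).encard := by
    rw [Set.encard_coe_eq_coe_finsetCard, Set.encard_coe_eq_coe_finsetCard, card_sigma]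
    exact_mod_cast hs.trans_eq (by simp)
  obtain ⟨f, hf_mem, hf_inj⟩ := s.finite_toSet.exists_injOn_of_encard_le hcard
  refine ⟨fun a => (f a).1, fun i => ?_⟩
  calc #{a ∈ s | (f a).1 = i} ≤ #(range (cap i)) := by
        refine card_le_card_of_injOn (fun a => (f a).2) (fun a ha => ?_) fun a ha b hb hab => ?_
        · simp only [coe_filter, Set.mem_ofPred_eq] at ha
          have := hf_mem ha.1
          simp only [Set.mem_preimage, mem_coe, mem_sigma, mem_univ, true_and, slots] at this
          simpa [← ha.2] using this
        · simp only [coe_filter, Set.mem_ofPred_eq] at ha hb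
          exact hf_inj ha.1 hb.1 (Sigma.ext (ha.2.trans hb.2.symm) (heq_of_eq hab))
    _ = cap i := card_range _

theorem Nat.minFac_injOn_of_pairwise_coprime {S : Set ℕ} (hS : S.Pairwise Nat.Coprime) :
    S.InjOn Nat.minFac := by
  intro a ha b hb hab
  by_contra hne
  have hdvd : a.minFac ∣ 1 := (hS ha hb hne).gcd_eq_one ▸
    Nat.dvd_gcd a.minFac_dvd (hab ▸ b.minFac_dvd)
  have ha1 : a = 1 := Nat.minFac_eq_one_iff.mp (Nat.dvd_one.mp hdvd)
  have hb1 : b = 1 := Nat.minFac_eq_one_iff.mp (hab ▸ Nat.dvd_one.mp hdvd)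
  exact hne (ha1.trans hb1.symm)

theorem Nat.minFac_mem_insert_one_primesLE {m n : ℕ} (hm : 0 < m) (hmn : m ≤ n) :
    m.minFac ∈ insert 1 (Nat.primesLE n) := by
  rcases eq_or_ne m 1 with rfl | hm1
  · simp
  · exact mem_insert_of_mem (Nat.mem_primesLE.mpr
      ⟨(Nat.minFac_le hm).trans hmn, Nat.minFac_prime hm1⟩)

theorem Nat.primeCounting_le_of_lt_nth_prime {n M : ℕ} (hn : n < Nat.nth Nat.Prime M) :
    Nat.primeCounting n ≤ M :=
  (Nat.count_le_iff_le_nth Nat.infinite_setOfPred_prime).mpr hn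

/-- Lower-bound direction: for `n < p_M` with `M = ∑ (k i - 1)` there is a `c`-coloring
of `{1,...,n}` whose color classes contain no `k i` pairwise coprime integers. -/
theorem vertex_coprime_ramsey_lower (c : ℕ) (hc : 1 ≤ c) (k : Fin c → ℕ)
    (hk : ∀ i, 2 ≤ k i) (n : ℕ)
    (hn : n < Nat.nth Nat.Prime (∑ i, (k i - 1) - 1)) :
    ∃ χ : ℕ → Fin c, ∀ i : Fin c, ¬ ∃ S : Finset ℕ, ↑S ⊆ Set.Icc 1 n ∧
      (∀ a ∈ S, χ a = i) ∧ (S : Set ℕ).Pairwise Nat.Coprime ∧ S.card = k i := by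
  have : Nonempty (Fin c) := ⟨⟨0, hc⟩⟩
  have hM : 1 ≤ ∑ i, (k i - 1) :=
    (Nat.le_sub_of_add_le (hk ⟨0, hc⟩)).trans
      (single_le_sum (f := fun i => k i - 1) (fun _ _ => Nat.zero_le _) (mem_univ _))
  have hQ : #(insert 1 (Nat.primesLE n)) ≤ ∑ i, (k i - 1) :=
    calc #(insert 1 (Nat.primesLE n)) ≤ Nat.primeCounting n + 1 := by
          rw [← Nat.primesLE_card_eq_primeCounting]; exact card_insert_le _ _
      _ ≤ ∑ i, (k i - 1) := by have := Nat.primeCounting_le_of_lt_nth_prime hn; omega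
  obtain ⟨g, hg⟩ := (insert 1 (Nat.primesLE n)).exists_forall_card_fiber_le_of_card_le_sum _ hQ
  refine ⟨fun m => g m.minFac, fun i ⟨S, hS, hSi, hS_coprime, hS_card⟩ => ?_⟩
  have hS_le : #S ≤ k i - 1 := by
    refine (card_le_card_of_injOn Nat.minFac (fun m hm => ?_)
      (Nat.minFac_injOn_of_pairwise_coprime hS_coprime)).trans (hg i)
    obtain ⟨hm1, hmn⟩ := hS hm
    simpa [hSi m hm] using Nat.minFac_mem_insert_one_primesLE hm1 hmn
  have := hk i
  omega
end

section
/- For k, c ≥ 2, the diagonal vertex-coprime Ramsey number R_cop(k;c) equals p_{c(k−1)}, and for s,t ≥ 2 the two-color off-diagonal value R_cop(s,t) equals p_{s+t−2}. -/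
/-!
Write `m = ∑ i, (k i - 1)`. The integers `1, p_1, …, p_m` lie in `[1, p_m]` and are pairwise
coprime, so by pigeonhole some colour `i` contains `k i` of them. Conversely, below `p_m` give
`1` the index `0` and every other integer the index `j` of its least prime factor `p_j`; pairwise
coprime integers have distinct indices, all `< m`. Splitting `[0, m)` into parts of sizes
`k i - 1` and colouring each integer by the part containing its index leaves every colour `i`
with at most `k i - 1` pairwise coprime members.
-/

open Finset

/-- Ramsey arrow `n → (k i)ᵢ` for pairwise coprime sets; `R_cop(k)` is the least such `n`. -/
def CoprimeArrows {ι : Type*} (n : ℕ) (k : ι → ℕ) : Prop :=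
  ∀ χ : ℕ → ι, ∃ i : ι, ∃ S : Finset ℕ,
    ↑S ⊆ Set.Icc 1 n ∧ (∀ a ∈ S, χ a = i) ∧ (S : Set ℕ).Pairwise Nat.Coprime ∧
      S.card = k i

namespace Nat

def minFacIndex (x : ℕ) : ℕ := if x = 1 then 0 else count Prime x.minFac + 1

lemma minFacIndex_le_of_lt_nth {x j : ℕ} (hx : x ≠ 0) (h : x < nth Prime j) :
    minFacIndex x ≤ j := by
  unfold minFacIndex
  split_ifs with h1
  · exact j.zero_le
  · have hq : x.minFac < nth Prime j := (minFac_le (pos_of_ne_zero hx)).trans_lt h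
    rw [← nth_count (minFac_prime h1)] at hq
    exact (nth_lt_nth infinite_setOfPred_prime).1 hq

lemma injOn_minFacIndex {S : Set ℕ} (hS : S.Pairwise Coprime) : S.InjOn minFacIndex := by
  intro x hx y hy hxy
  by_contra hne
  unfold minFacIndex at hxy
  split_ifs at hxy with h1 h2 h2
  · exact hne (h1.trans h2.symm)
  · have heq : x.minFac = y.minFac := by
      rw [← nth_count (minFac_prime h1), ← nth_count (minFac_prime h2), add_right_cancel hxy]
    exact (minFac_prime h1).ne_one <|
      eq_one_of_dvd_coprimes (hS hx hy hne) (minFac_dvd x) (heq ▸ minFac_dvd y)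

end Nat

lemma exists_card_fiber_eq {ι : Type*} [Fintype ι] [DecidableEq ι] (a : ι → ℕ) :
    ∃ ψ : Fin (∑ i, a i) → ι, ∀ i, #{t | ψ t = i} = a i := by
  let e : (Σ i, Fin (a i)) ≃ Fin (∑ i, a i) := Fintype.equivFinOfCardEq (by simp)
  refine ⟨fun t => (e.symm t).1, fun i => ?_⟩
  rw [← Fintype.card_subtype, ← Fintype.card_fin (a i)]
  exact Fintype.card_congr (e.symm.subtypeEquivOfSubtype.trans (Equiv.sigmaSubtype i))

lemma Finset.exists_le_card_fiber_of_sum_lt_card {α ι : Type*} [Fintype ι] [DecidableEq ι]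
    (f : α → ι) {s : Finset α} (k : ι → ℕ) (hs : ∑ i, (k i - 1) < #s) :
    ∃ i, k i ≤ #{a ∈ s | f a = i} := by
  by_contra! h
  rw [card_eq_sum_card_fiberwise (fun a _ => mem_coe.2 (mem_univ (f a)))] at hs
  exact hs.not_ge (sum_le_sum fun i _ => Nat.le_sub_one_of_lt (h i))

lemma coprimeArrows_nth_prime {ι : Type*} [Fintype ι] (k : ι → ℕ) :
    CoprimeArrows (Nat.nth Nat.Prime (∑ i, (k i - 1) - 1)) k := by
  classical
  intro χ
  set m := ∑ i, (k i - 1)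
  let T := insert 1 ((range m).image (Nat.nth Nat.Prime))
  have hT_card : #T = m + 1 := by
    rw [card_insert_of_notMem,
      card_image_of_injective _ (Nat.nth_injective Nat.infinite_setOfPred_prime), card_range]
    simp only [mem_image, not_exists, not_and]
    exact fun j _ h => (Nat.prime_nth_prime j).ne_one h
  have hT_coprime : (T : Set ℕ).Pairwise Nat.Coprime := by
    rw [coe_insert, Set.pairwise_insert_of_symm, coe_image]
    refine ⟨?_, fun _ _ _ => Nat.coprime_one_left _⟩
    rintro _ ⟨j, -, rfl⟩ _ ⟨j', -, rfl⟩ hne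
    exact (Nat.coprime_primes (Nat.prime_nth_prime j) (Nat.prime_nth_prime j')).2 hne
  have hT_sub : ↑T ⊆ Set.Icc 1 (Nat.nth Nat.Prime (m - 1)) := by
    rw [coe_insert, Set.insert_subset_iff, coe_image]
    refine ⟨⟨le_rfl, (Nat.prime_nth_prime _).one_lt.le⟩, ?_⟩
    rintro _ ⟨j, hj, rfl⟩
    exact ⟨(Nat.prime_nth_prime j).one_lt.le,
      Nat.nth_monotone Nat.infinite_setOfPred_prime (by simp at hj; omega)⟩
  obtain ⟨i, hi⟩ := exists_le_card_fiber_of_sum_lt_card χ (s := T) k (by omega)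
  obtain ⟨S, hST, hS⟩ := exists_subset_card_eq hi
  have hST' : S ⊆ T := hST.trans (filter_subset _ _)
  exact ⟨i, S, (coe_subset.2 hST').trans hT_sub, fun a ha => (mem_filter.1 (hST ha)).2,
    hT_coprime.mono (coe_subset.2 hST'), hS⟩

lemma not_coprimeArrows_of_lt_nth_prime {ι : Type*} [Fintype ι] {k : ι → ℕ}
    (hk : ∀ i, k i ≠ 0) (hm : ∑ i, (k i - 1) ≠ 0) {n : ℕ}
    (hn : n < Nat.nth Nat.Prime (∑ i, (k i - 1) - 1)) :
    ¬ CoprimeArrows n k := by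
  classical
  set m := ∑ i, (k i - 1)
  have : NeZero m := ⟨hm⟩
  obtain ⟨ψ, hψ⟩ := exists_card_fiber_eq fun i => k i - 1
  intro h
  obtain ⟨i, S, hS_sub, hS_color, hS_coprime, hS_card⟩ :=
    h fun x => ψ (Fin.ofNat m (Nat.minFacIndex x))
  have hS_lt : ∀ x ∈ S, Nat.minFacIndex x < m := fun x hx =>
    (Nat.minFacIndex_le_of_lt_nth (Nat.one_le_iff_ne_zero.1 (hS_sub hx).1)
      ((hS_sub hx).2.trans_lt hn)).trans_lt (Nat.sub_one_lt hm)
  have hS_le : #S ≤ #{t | ψ t = i} := by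
    refine card_le_card_of_injOn (fun x => Fin.ofNat m (Nat.minFacIndex x))
      (fun x hx => by simpa using hS_color x hx) fun x hx y hy hxy => ?_
    have := congrArg Fin.val hxy
    simp only [Fin.val_ofNat, Nat.mod_eq_of_lt (hS_lt x hx), Nat.mod_eq_of_lt (hS_lt y hy)] at this
    exact Nat.injOn_minFacIndex hS_coprime hx hy this
  have := hk i
  rw [hψ i] at hS_le
  omega

theorem isLeast_coprimeArrows {ι : Type*} [Fintype ι] {k : ι → ℕ} (hk : ∀ i, k i ≠ 0)
    (hm : ∑ i, (k i - 1) ≠ 0) :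
    IsLeast {n | CoprimeArrows n k} (Nat.nth Nat.Prime (∑ i, (k i - 1) - 1)) :=
  ⟨coprimeArrows_nth_prime k, fun _ hn =>
    not_lt.1 fun hlt => not_coprimeArrows_of_lt_nth_prime hk hm hlt hn⟩

/-- Diagonal and off-diagonal forms: `R_cop(k; c) = p_{c(k-1)}` and
`R_cop(s, t) = p_{s+t-2}` (primes 1-indexed via `Nat.nth Nat.Prime (m - 1)`). -/
theorem vertex_coprime_ramsey_diagonal_offdiagonal (k c s t : ℕ)
    (hk : 2 ≤ k) (hc : 2 ≤ c) (hs : 2 ≤ s) (ht : 2 ≤ t) :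
    IsLeast {n : ℕ | ∀ χ : ℕ → Fin c, ∃ i : Fin c, ∃ S : Finset ℕ,
        ↑S ⊆ Set.Icc 1 n ∧ (∀ a ∈ S, χ a = i) ∧
        (S : Set ℕ).Pairwise Nat.Coprime ∧ S.card = k}
      (Nat.nth Nat.Prime (c * (k - 1) - 1)) ∧
    IsLeast {n : ℕ | ∀ χ : ℕ → Fin 2, ∃ i : Fin 2, ∃ S : Finset ℕ,
        ↑S ⊆ Set.Icc 1 n ∧ (∀ a ∈ S, χ a = i) ∧
        (S : Set ℕ).Pairwise Nat.Coprime ∧ S.card = (if i = 0 then s else t)}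
      (Nat.nth Nat.Prime (s + t - 2 - 1)) := by
  have hdiag : ∑ _i : Fin c, (k - 1) = c * (k - 1) := by simp
  have hoff : ∑ i : Fin 2, ((if i = 0 then s else t) - 1) = s + t - 2 := by
    simp only [Fin.sum_univ_two, Fin.isValue, if_true, one_ne_zero, if_false]
    omega
  constructor
  · have := isLeast_coprimeArrows (k := fun _ : Fin c => k) (fun _ => by omega)
      (by rw [hdiag]; exact mul_ne_zero (by omega) (by omega))
    rwa [hdiag] at this
  · have := isLeast_coprimeArrows (k := fun i : Fin 2 => if i = 0 then s else t)
      (fun i => by split <;> omega) (by rw [hoff]; omega)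
    rwa [hoff] at this
end

section
/- Let A be a finite set of atoms with |A| = r, and let H be a support-disjointness graph in which every singleton support occurs and every vertex has nonempty support. For mixed demands k_1,...,k_c ≥ 2 with M = Σ(k_i−1), every c-coloring forces a monochromatic k_i-clique in some color i if and only if r ≥ M + 1. -/
/-!
If `#A ≤ ∑ i, (k i - 1)`, colour the atoms so that colour `i` is used at most `k i - 1` times and
give each vertex the colour of one atom of its support. The chosen atoms of a pairwise disjoint
monochromatic family are distinct, so such a family has fewer than `k i` members. Conversely, if
`#A > ∑ i, (k i - 1)`, pigeonhole on the singleton-support vertices yields `k i` of them of colour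
`i`, and distinct singletons are disjoint.
-/

open Finset

lemma exists_lt_card_fiber_of_sum_lt_card {β ι : Type*} [Fintype ι] [DecidableEq ι]
    (s : Finset β) (f : β → ι) (n : ι → ℕ) (h : ∑ i, n i < #s) :
    ∃ i, n i < #{x ∈ s | f x = i} := by
  by_contra! hfiber
  have hcover : #s = ∑ i, #{x ∈ s | f x = i} :=
    card_eq_sum_card_fiberwise fun x _ => mem_univ (f x)
  have : ∑ i, #{x ∈ s | f x = i} ≤ ∑ i, n i := sum_le_sum fun i _ => hfiber i
  omega

/-- Map `β` injectively into `Σ i, Fin (n i)` and colour by the first coordinate. -/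
lemma exists_card_fiber_le_of_card_le_sum {β ι : Type*} [Fintype β] [Fintype ι] [DecidableEq ι]
    (n : ι → ℕ) (h : Fintype.card β ≤ ∑ i, n i) :
    ∃ f : β → ι, ∀ i, #{x | f x = i} ≤ n i := by
  obtain ⟨e⟩ : Nonempty (β ↪ Σ i, Fin (n i)) :=
    Function.Embedding.nonempty_of_card_le (by simpa using h)
  refine ⟨fun x => (e x).1, fun i => ?_⟩
  calc #{x | (e x).1 = i}
      ≤ #{p : Σ j, Fin (n j) | p.1 = i} :=
        card_le_card_of_injOn e (fun x hx => by simpa using hx) e.injective.injOn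
    _ = n i := by
        rw [← Fintype.card_subtype, Fintype.card_congr (Equiv.sigmaSubtype i), Fintype.card_fin]

section SupportDisjointness

variable {α V ι : Type*} [Fintype ι] [DecidableEq ι] {σ : V → Finset α} {A : Finset α}

lemma exists_coloring_card_le_of_pairwiseDisjoint (hσA : ∀ v, σ v ⊆ A)
    (hne : ∀ v, (σ v).Nonempty) (n : ι → ℕ) (hA : #A ≤ ∑ i, n i) :
    ∃ χ : V → ι, ∀ i (S : Finset V), (∀ v ∈ S, χ v = i) →
      (S : Set V).PairwiseDisjoint σ → #S ≤ n i := by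
  obtain ⟨f, hf⟩ := exists_card_fiber_le_of_card_le_sum (β := A) n (by simpa using hA)
  let atom : V → A := fun v => ⟨(hne v).choose, hσA v (hne v).choose_spec⟩
  refine ⟨fun v => f (atom v), fun i S hS hdisj => ?_⟩
  have hinj : Set.InjOn atom S := by
    intro u hu v hv huv
    have hsame : (hne u).choose = (hne v).choose := congrArg Subtype.val huv
    exact hdisj.elim_finset hu hv _ (hne u).choose_spec (hsame ▸ (hne v).choose_spec)
  calc #S ≤ #{x | f x = i} :=
        card_le_card_of_injOn atom (fun v hv => by simpa using hS v hv) hinj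
    _ ≤ n i := hf i

lemma exists_pairwiseDisjoint_monochromatic_of_sum_lt_card (hsing : ∀ a ∈ A, ∃ v, σ v = {a})
    (n : ι → ℕ) (hA : ∑ i, n i < #A) (χ : V → ι) :
    ∃ i, ∃ S : Finset V, #S = n i + 1 ∧ (∀ v ∈ S, χ v = i) ∧
      (S : Set V).PairwiseDisjoint σ := by
  choose g hg using hsing
  let vertex : A ↪ V :=
    ⟨fun a => g a a.2, fun a b hab => Subtype.ext <| singleton_injective <| by
      simpa only [hg] using congrArg σ hab⟩
  have hσvertex (a : A) : σ (vertex a) = {a.1} := hg a a.2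
  obtain ⟨i, hi⟩ := exists_lt_card_fiber_of_sum_lt_card A.attach (χ ∘ vertex) n
    (by rwa [card_attach])
  obtain ⟨T, hTsub, hTcard⟩ := exists_subset_card_eq (Nat.succ_le_of_lt hi)
  refine ⟨i, T.map vertex, by rw [card_map, hTcard], ?_, ?_⟩
  · intro v hv
    obtain ⟨a, ha, rfl⟩ := mem_map.mp hv
    exact (mem_filter.mp (hTsub ha)).2
  · intro u hu v hv huv
    obtain ⟨a, -, rfl⟩ := mem_map.mp (mem_coe.mp hu)
    obtain ⟨b, -, rfl⟩ := mem_map.mp (mem_coe.mp hv)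
    have hab : a.1 ≠ b.1 := fun h => huv (congrArg vertex (Subtype.ext h))
    simpa only [Function.onFun, hσvertex, disjoint_singleton] using hab

end SupportDisjointness

theorem support_disjointness_ramsey_no_universal_general {α V : Type*}
    (A : Finset α) (r : ℕ) (hr : A.card = r) (σ : V → Finset α)
    (hσA : ∀ v, σ v ⊆ A) (hsing : ∀ a ∈ A, ∃ v, σ v = {a})
    (hne : ∀ v, (σ v).Nonempty)
    (c : ℕ) (k : Fin c → ℕ) (hk : ∀ i, 2 ≤ k i) :
    (∀ χ : V → Fin c, ∃ i : Fin c, ∃ S : Finset V, S.card = k i ∧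
      (∀ v ∈ S, χ v = i) ∧
      (S : Set V).Pairwise fun u v => Disjoint (σ u) (σ v)) ↔
    ∑ i, (k i - 1) + 1 ≤ r := by
  constructor
  · intro hforce
    by_contra! hsmall
    obtain ⟨χ, hχ⟩ :=
      exists_coloring_card_le_of_pairwiseDisjoint hσA hne (fun i => k i - 1) (by omega)
    obtain ⟨i, S, hS, hχS, hdisj⟩ := hforce χ
    have := hχ i S hχS hdisj
    have := hk i
    omega
  · intro hlarge χ
    obtain ⟨i, S, hS, hχS, hdisj⟩ :=
      exists_pairwiseDisjoint_monochromatic_of_sum_lt_card hsing (fun i => k i - 1) (by omega) χ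
    exact ⟨i, S, by have := hk i; omega, hχS, hdisj⟩

/-- Support-disjointness Ramsey theorem, no-universal case: every singleton support
occurs and every vertex has nonempty support; forcing holds iff `r ≥ M + 1`. -/
theorem support_disjointness_ramsey_no_universal {α V : Type*} [DecidableEq V]
    (A : Finset α) (r : ℕ) (hr : A.card = r) (σ : V → Finset α)
    (hσA : ∀ v, σ v ⊆ A) (hsing : ∀ a ∈ A, ∃ v, σ v = {a})
    (hne : ∀ v, (σ v).Nonempty)
    (c : ℕ) (hc : 1 ≤ c) (k : Fin c → ℕ) (hk : ∀ i, 2 ≤ k i) :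
    (∀ χ : V → Fin c, ∃ i : Fin c, ∃ S : Finset V, S.card = k i ∧
      (∀ v ∈ S, χ v = i) ∧
      (S : Set V).Pairwise fun u v => Disjoint (σ u) (σ v)) ↔
    ∑ i, (k i - 1) + 1 ≤ r :=
  support_disjointness_ramsey_no_universal_general A r hr σ hσA hsing hne c k hk
end

section
/- For all k_1,...,k_c ≥ 2, the edge-coloring coprime Ramsey number satisfies R_cop^edge(k_1,...,k_c) = p_{R−1}, where R = R_cl(k_1,...,k_c) is the classical multicolor Ramsey number for complete graphs. -/
/-! Both inequalities transport colourings along a map that is injective on the relevant sets.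
The ranks `1, 2, …, R` go to `1, p₁, …, p_{R-1}`, which are pairwise coprime and at most
`p_{R-1}`, so a monochromatic `K_{k_i}` of the pulled-back colouring of `K_R` gives a coprime one.
Conversely, on a pairwise coprime set of positive integers below `p_{R-1}` the least prime factors
are distinct, so sending `1` to rank `1` and `a > 1` to one more than the index of its least prime
factor is injective into `{1, …, R-1}`; a colouring of `K_{R-1}` without the required monochromatic
clique therefore pulls back to a colouring of the coprime graph without one.
(`Nat.nth Nat.Prime m` is `p_{m+1}`.) -/

open Finset

section IsRamsey

variable {α β ι : Type*}

def IsRamsey (P : Finset α → Prop) (k : ι → ℕ) : Prop :=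
  ∀ χ : Sym2 α → ι, ∃ i, ∃ S : Finset α, P S ∧ S.card = k i ∧
    ∀ a ∈ S, ∀ b ∈ S, a ≠ b → χ s(a, b) = i

theorem isRamsey_and_iff {P Q : Finset α → Prop} {k : ι → ℕ} :
    IsRamsey (fun S => P S ∧ Q S) k ↔ ∀ χ : Sym2 α → ι, ∃ i, ∃ S : Finset α,
      P S ∧ S.card = k i ∧ Q S ∧ ∀ a ∈ S, ∀ b ∈ S, a ≠ b → χ s(a, b) = i :=
  forall_congr' fun _ => exists_congr fun _ => exists_congr fun _ => by tauto

theorem IsRamsey.of_injOn_image [DecidableEq β] {P : Finset α → Prop} {Q : Finset β → Prop}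
    {k : ι → ℕ} (f : α → β) (hf : ∀ S, P S → Set.InjOn f S ∧ Q (S.image f))
    (h : IsRamsey P k) : IsRamsey Q k := by
  intro χ
  obtain ⟨i, S, hS, hcard, hmono⟩ := h (χ ∘ Sym2.map f)
  refine ⟨i, S.image f, (hf S hS).2, by rw [card_image_of_injOn (hf S hS).1, hcard], ?_⟩
  simp only [mem_image]
  rintro _ ⟨a, ha, rfl⟩ _ ⟨b, hb, rfl⟩ hab
  exact hmono a ha b hb (ne_of_apply_ne f hab)

theorem IsRamsey.exists_le_of_subset_Icc [Nonempty ι] {k : ι → ℕ} {N : ℕ}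
    (h : IsRamsey (fun S : Finset ℕ => ↑S ⊆ Set.Icc 1 N) k) : ∃ i, k i ≤ N := by
  obtain ⟨i, S, hS, hcard, -⟩ := h fun _ => Classical.arbitrary ι
  refine ⟨i, ?_⟩
  calc k i = S.card := hcard.symm
    _ ≤ (Icc 1 N).card := card_le_card fun x hx => by simpa using hS hx
    _ = N := by simp

end IsRamsey

noncomputable def primeOfRank (r : ℕ) : ℕ :=
  if r ≤ 1 then 1 else Nat.nth Nat.Prime (r - 2)

noncomputable def rankOfMinFac (a : ℕ) : ℕ :=
  if a ≤ 1 then 1 else Nat.count Nat.Prime a.minFac + 2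

theorem primeOfRank_mem_Icc {r m : ℕ} (hr : r ≤ m + 2) :
    primeOfRank r ∈ Set.Icc 1 (Nat.nth Nat.Prime m) := by
  unfold primeOfRank
  split_ifs
  · exact ⟨le_rfl, (Nat.prime_nth_prime m).one_lt.le⟩
  · exact ⟨(Nat.prime_nth_prime _).one_lt.le,
      (Nat.nth_le_nth Nat.infinite_setOfPred_prime).2 (by omega)⟩

theorem primeOfRank_injOn : Set.InjOn primeOfRank (Set.Ici 1) := by
  intro r hr s hs h
  simp only [Set.mem_Ici] at hr hs
  unfold primeOfRank at h
  have := (Nat.prime_nth_prime (r - 2)).one_lt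
  have := (Nat.prime_nth_prime (s - 2)).one_lt
  split_ifs at h
  · omega
  · omega
  · omega
  · have := Nat.nth_injective Nat.infinite_setOfPred_prime h
    omega

theorem coprime_primeOfRank {r s : ℕ} (h : primeOfRank r ≠ primeOfRank s) :
    (primeOfRank r).Coprime (primeOfRank s) := by
  unfold primeOfRank at h ⊢
  split_ifs at h ⊢
  · exact Nat.coprime_one_left _
  · exact Nat.coprime_one_left _
  · exact Nat.coprime_one_right _
  · exact (Nat.coprime_primes (Nat.prime_nth_prime _) (Nat.prime_nth_prime _)).2 h

theorem rankOfMinFac_mem_Icc {a m : ℕ} (ha : a < Nat.nth Nat.Prime m) :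
    rankOfMinFac a ∈ Set.Icc 1 (m + 1) := by
  unfold rankOfMinFac
  split_ifs
  · simp
  · have hp : a.minFac.Prime := Nat.minFac_prime (by omega)
    have : Nat.count Nat.Prime a.minFac < m := by
      rw [← (Nat.nth_lt_nth Nat.infinite_setOfPred_prime), Nat.nth_count hp]
      exact (Nat.minFac_le (by omega)).trans_lt ha
    simp only [Set.mem_Icc]
    omega

theorem minFac_ne_of_coprime {a b : ℕ} (hab : a.Coprime b) (ha : a ≠ 1) :
    a.minFac ≠ b.minFac := by
  intro h
  have := Nat.eq_one_of_dvd_coprimes hab a.minFac_dvd (h ▸ b.minFac_dvd)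
  exact ha (Nat.minFac_eq_one_iff.1 this)

theorem rankOfMinFac_injOn {s : Set ℕ} (hs : s.Pairwise Nat.Coprime) (hpos : ∀ a ∈ s, 0 < a) :
    s.InjOn rankOfMinFac := by
  intro a ha b hb h
  by_contra hab
  have hcop := hs ha hb hab
  have ha0 := hpos a ha
  have hb0 := hpos b hb
  unfold rankOfMinFac at h
  split_ifs at h
  · omega
  · omega
  · omega
  · have := Nat.count_injective (Nat.minFac_prime (by omega)) (Nat.minFac_prime (by omega))
      (by omega : Nat.count Nat.Prime a.minFac = Nat.count Nat.Prime b.minFac)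
    exact minFac_ne_of_coprime hcop (by omega) this

theorem isRamsey_coprime_of_isRamsey {ι : Type*} {k : ι → ℕ} {m : ℕ}
    (h : IsRamsey (fun S : Finset ℕ => ↑S ⊆ Set.Icc 1 (m + 2)) k) :
    IsRamsey (fun S : Finset ℕ =>
      ↑S ⊆ Set.Icc 1 (Nat.nth Nat.Prime m) ∧ (S : Set ℕ).Pairwise Nat.Coprime) k := by
  classical
  refine h.of_injOn_image primeOfRank fun S hS => ⟨primeOfRank_injOn.mono fun r hr => (hS hr).1, ?_, ?_⟩
  · simp only [coe_image, Set.image_subset_iff]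
    exact fun r hr => primeOfRank_mem_Icc (hS hr).2
  · rw [coe_image]
    rintro _ ⟨r, -, rfl⟩ _ ⟨s, -, rfl⟩ h
    exact coprime_primeOfRank h

theorem isRamsey_of_isRamsey_coprime {ι : Type*} {k : ι → ℕ} {m n : ℕ}
    (hn : n < Nat.nth Nat.Prime m)
    (h : IsRamsey (fun S : Finset ℕ =>
      ↑S ⊆ Set.Icc 1 n ∧ (S : Set ℕ).Pairwise Nat.Coprime) k) :
    IsRamsey (fun S : Finset ℕ => ↑S ⊆ Set.Icc 1 (m + 1)) k := by
  classical
  refine h.of_injOn_image rankOfMinFac fun S hS =>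
    ⟨rankOfMinFac_injOn hS.2 fun a ha => (hS.1 ha).1, ?_⟩
  simp only [coe_image, Set.image_subset_iff]
  exact fun a ha => rankOfMinFac_mem_Icc ((hS.1 ha).2.trans_lt hn)

/-- Edge-coprime Ramsey reduction: `R_cop^edge(k_1,...,k_c) = p_{R-1}` where
`R = R_cl(k_1,...,k_c)` is the classical multicolor complete-graph Ramsey number
(primes 1-indexed, so `p_{R-1} = Nat.nth Nat.Prime (R - 2)`). -/
theorem edge_coprime_ramsey_reduction (c : ℕ) (hc : 1 ≤ c) (k : Fin c → ℕ)
    (hk : ∀ i, 2 ≤ k i) (R : ℕ)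
    (hR : IsLeast {N : ℕ | ∀ χ : Sym2 ℕ → Fin c, ∃ i : Fin c, ∃ S : Finset ℕ,
      ↑S ⊆ Set.Icc 1 N ∧ S.card = k i ∧
      ∀ a ∈ S, ∀ b ∈ S, a ≠ b → χ s(a, b) = i} R) :
    IsLeast {n : ℕ | ∀ χ : Sym2 ℕ → Fin c, ∃ i : Fin c, ∃ S : Finset ℕ,
      ↑S ⊆ Set.Icc 1 n ∧ S.card = k i ∧ (S : Set ℕ).Pairwise Nat.Coprime ∧
      ∀ a ∈ S, ∀ b ∈ S, a ≠ b → χ s(a, b) = i}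
    (Nat.nth Nat.Prime (R - 2)) := by
  have : Nonempty (Fin c) := ⟨⟨0, hc⟩⟩
  have hR2 : 2 ≤ R := by
    obtain ⟨i, hi⟩ := IsRamsey.exists_le_of_subset_Icc hR.1
    exact (hk i).trans hi
  refine ⟨isRamsey_and_iff.1 (isRamsey_coprime_of_isRamsey ?_), fun n hn => ?_⟩
  · rw [Nat.sub_add_cancel hR2]
    exact hR.1
  · by_contra! hlt
    have := hR.2 (isRamsey_of_isRamsey_coprime hlt (isRamsey_and_iff.2 hn))
    omega
end

section
/- Suppose a graph H has a clique C of size r and a labeling λ : V(H) → C that is the identity on C and distinct on adjacent vertices. Then every c-edge-coloring of H contains a monochromatic k_i-clique in some color i if and only if r ≥ R_cl(k_1,...,k_c), the classical multicolor Ramsey number. -/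
/-!
Compose `lab` with a bijection `C ≃ {1, …, r}`: since adjacent vertices get distinct labels, this
map is injective on every clique of `H`, so a monochromatic clique for a pulled-back coloring of
`H` is carried to a monochromatic set in `{1, …, r}`; hence `R ≤ r`. Conversely, a bijection
`{1, …, r} ≃ C` carries monochromatic sets in `{1, …, R}` to monochromatic cliques inside `C`.
-/

section

open Set

variable {α β ι : Type*}

def IsMonochromatic (χ : Sym2 α → ι) (i : ι) (S : Finset α) : Prop :=
  ∀ a ∈ S, ∀ b ∈ S, a ≠ b → χ s(a, b) = i

def HasMonochromaticSubset (s : Set α) (k : ι → ℕ) (χ : Sym2 α → ι) : Prop :=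
  ∃ i, ∃ S : Finset α, ↑S ⊆ s ∧ S.card = k i ∧ IsMonochromatic χ i S

def SimpleGraph.HasMonochromaticClique (G : SimpleGraph α) (k : ι → ℕ) (χ : Sym2 α → ι) :
    Prop :=
  ∃ i, ∃ S : Finset α, S.card = k i ∧ G.IsClique ↑S ∧ IsMonochromatic χ i S

theorem IsMonochromatic.image [DecidableEq β] {f : α → β} {χ : Sym2 β → ι} {i : ι}
    {S : Finset α} (h : IsMonochromatic (χ ∘ Sym2.map f) i S) :
    IsMonochromatic χ i (S.image f) := by
  simp only [IsMonochromatic, Finset.mem_image]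
  rintro _ ⟨a, ha, rfl⟩ _ ⟨b, hb, rfl⟩ hab
  exact h a ha b hb (ne_of_apply_ne f hab)

theorem HasMonochromaticSubset.nonempty {s : Set α} {k : ι → ℕ} {χ : Sym2 α → ι}
    (h : HasMonochromaticSubset s k χ) (hk : ∀ i, 0 < k i) : s.Nonempty := by
  obtain ⟨i, S, hSs, hS, -⟩ := h
  obtain ⟨a, ha⟩ := Finset.card_pos.1 (hS ▸ hk i)
  exact ⟨a, hSs ha⟩

theorem SimpleGraph.HasMonochromaticClique.hasMonochromaticSubset {G : SimpleGraph α}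
    {k : ι → ℕ} {χ : Sym2 β → ι} {g : α → β} {s : Set β} (hgs : ∀ v, g v ∈ s)
    (hg : ∀ u v, G.Adj u v → g u ≠ g v) (h : G.HasMonochromaticClique k (χ ∘ Sym2.map g)) :
    HasMonochromaticSubset s k χ := by
  classical
  obtain ⟨i, S, hS, hclique, hmono⟩ := h
  have hinj : InjOn g S := fun u hu v hv huv ↦
    of_not_not fun hne ↦ hg u v (hclique hu hv hne) huv
  refine ⟨i, S.image g, ?_, ?_, hmono.image⟩
  · rw [Finset.coe_image]
    exact image_subset_iff.2 fun v _ ↦ hgs v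
  · rw [Finset.card_image_of_injOn hinj, hS]

theorem HasMonochromaticSubset.hasMonochromaticClique {G : SimpleGraph β} {k : ι → ℕ}
    {χ : Sym2 β → ι} {f : α → β} {s : Set α} {C : Set β} (hC : G.IsClique C)
    (hfs : MapsTo f s C) (hinj : InjOn f s) (h : HasMonochromaticSubset s k (χ ∘ Sym2.map f)) :
    G.HasMonochromaticClique k χ := by
  classical
  obtain ⟨i, S, hSs, hS, hmono⟩ := h
  refine ⟨i, S.image f, ?_, hC.subset ?_, hmono.image⟩
  · rw [Finset.card_image_of_injOn (hinj.mono hSs), hS]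
  · simpa only [Finset.coe_image] using (hfs.mono_left hSs).image_subset

end

theorem clique_label_edge_transfer_general {V : Type*}
    (H : SimpleGraph V) (C : Finset V) (r : ℕ) (hC : H.IsClique ↑C)
    (hCr : C.card = r) (lab : V → V) (hmem : ∀ v, lab v ∈ C)
    (hadj : ∀ u v, H.Adj u v → lab u ≠ lab v)
    (c : ℕ) (hc : 1 ≤ c) (k : Fin c → ℕ) (hk : ∀ i, 2 ≤ k i) (R : ℕ)
    (hR : IsLeast {N : ℕ | ∀ χ : Sym2 ℕ → Fin c, ∃ i : Fin c, ∃ S : Finset ℕ,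
      ↑S ⊆ Set.Icc 1 N ∧ S.card = k i ∧
      ∀ a ∈ S, ∀ b ∈ S, a ≠ b → χ s(a, b) = i} R) :
    (∀ χ : Sym2 V → Fin c, ∃ i : Fin c, ∃ S : Finset V, S.card = k i ∧
      H.IsClique ↑S ∧ ∀ a ∈ S, ∀ b ∈ S, a ≠ b → χ s(a, b) = i) ↔
    R ≤ r := by
  have hcard : (C : Set V).encard = (Set.Icc 1 r).encard := by
    simp [← Finset.coe_Icc, Set.encard_coe_eq_coe_finsetCard, hCr]
  constructor
  · intro h
    obtain ⟨φ, hφ⟩ := C.finite_toSet.exists_bijOn_of_encard_eq hcard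
    refine hR.2 fun χ ↦
      SimpleGraph.HasMonochromaticClique.hasMonochromaticSubset (g := φ ∘ lab) ?_ ?_ (h _)
    · exact fun v ↦ hφ.mapsTo (hmem v)
    · exact fun u v huv he ↦ hadj u v huv (hφ.injOn (hmem u) (hmem v) he)
  · intro hRr χ
    -- `ψ` below is a total map `ℕ → V`, so `V` needs a point; `R ≥ 1` puts one in `C`.
    have hR1 : 1 ≤ R := Set.nonempty_Icc.1 <|
      HasMonochromaticSubset.nonempty (hR.1 (Function.const _ ⟨0, hc⟩))
        fun i ↦ zero_lt_two.trans_le (hk i)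
    have : Nonempty V := ⟨(C.card_pos.1 (by omega)).choose⟩
    obtain ⟨ψ, hψ⟩ := (Set.finite_Icc 1 r).exists_bijOn_of_encard_eq hcard.symm
    have hsub : Set.Icc 1 R ⊆ Set.Icc 1 r := Set.Icc_subset_Icc_right hRr
    exact HasMonochromaticSubset.hasMonochromaticClique hC (hψ.mapsTo.mono_left hsub)
      (hψ.injOn.mono hsub) (hR.1 _)

/-- Rank Ramsey transfer, edge form: with a clique-label certificate of rank `r`,
every `c`-edge-coloring of `H` forces a monochromatic `k i`-clique in some color
iff `r ≥ R_cl(k_1,...,k_c)`, the classical multicolor Ramsey number. -/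
theorem clique_label_edge_transfer {V : Type*} [DecidableEq V]
    (H : SimpleGraph V) (C : Finset V) (r : ℕ) (hC : H.IsClique ↑C)
    (hCr : C.card = r) (lab : V → V) (hmem : ∀ v, lab v ∈ C)
    (hid : ∀ v ∈ C, lab v = v) (hadj : ∀ u v, H.Adj u v → lab u ≠ lab v)
    (c : ℕ) (hc : 1 ≤ c) (k : Fin c → ℕ) (hk : ∀ i, 2 ≤ k i) (R : ℕ)
    (hR : IsLeast {N : ℕ | ∀ χ : Sym2 ℕ → Fin c, ∃ i : Fin c, ∃ S : Finset ℕ,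
      ↑S ⊆ Set.Icc 1 N ∧ S.card = k i ∧
      ∀ a ∈ S, ∀ b ∈ S, a ≠ b → χ s(a, b) = i} R) :
    (∀ χ : Sym2 V → Fin c, ∃ i : Fin c, ∃ S : Finset V, S.card = k i ∧
      H.IsClique ↑S ∧ ∀ a ∈ S, ∀ b ∈ S, a ≠ b → χ s(a, b) = i) ↔
    R ≤ r :=
  clique_label_edge_transfer_general H C r hC hCr lab hmem hadj c hc k hk R hR
end

section
/- For every k ≥ 2, the largest n for which there exists a two-coloring of {1,...,n} with color classes differing in size by at most 1 and with no monochromatic set of k pairwise coprime integers equals p_{2k−2} − 1. -/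
/-!
Write `p_m` for the `m`-th prime; in Lean it is `nth Nat.Prime (m - 1)`.

Upper bound: `1, p₁, …, p_{2k-2}` are `2k - 1` pairwise coprime numbers, so as soon as they all
lie in `[1, n]`, one color class contains `k` of them.

Lower bound: color by least prime factor, splitting the primes below `p_{2k-2}` into
`B₀ = {p₂, …, p_{k-1}}` and `B₁ = {2, p_k, …, p_{2k-3}}`. Sending each element `≠ 1` of a
pairwise coprime monochromatic set to a prime factor on its side is injective, so such a set has
at most `k - 1` elements. Chebyshev's bound `2ⁿ ≤ (n + 1) n^{π n}`, together with
`p_m ≥ 3m - 5` (primes beyond `3` are `±1 mod 6`), gives `p_{2k-2} ≤ p_k²`. Hence the odd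
numbers on the `B₁` side below `p_{2k-2}` are exactly the primes `p_k, …, p_{2k-3}`, so that side
has `n/2 + (k - 2)` elements, and moving `6, 12, …, 6(k - 2)` to the other side balances the
coloring.
-/

open Finset Nat
open scoped Nat.Prime

theorem Nat.lcmUpto_le_pow_primeCounting (n : ℕ) : lcmUpto n ≤ n ^ π n := by
  rw [lcmUpto_eq_prod_pow_log, ← primesLE_card_eq_primeCounting]
  refine prod_le_pow_card _ _ _ fun p hp => pow_log_le_self p ?_
  have := two_le_of_mem_primesLE hp
  have := le_of_mem_primesLE hp
  omega

theorem Nat.two_pow_le_succ_mul_pow_primeCounting (n : ℕ) : 2 ^ n ≤ (n + 1) * n ^ π n :=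
  (Chebyshev.two_pow_le_mul_lcmUpto n).trans
    (Nat.mul_le_mul_left _ (lcmUpto_le_pow_primeCounting n))

theorem Nat.primeCounting_nth_prime (m : ℕ) : π (nth Nat.Prime m) = m + 1 := by
  rw [primeCounting_eq_primeCounting'_succ, primeCounting', count_succ,
    count_nth_of_infinite infinite_setOfPred_prime, if_pos (prime_nth_prime m)]

theorem Nat.primesLE_nth_prime_subset_primesBelow_nth_prime {i j : ℕ} (h : i < j) :
    primesLE (nth Nat.Prime i) ⊆ primesBelow (nth Nat.Prime j) := fun _ hp =>
  mem_primesBelow.2 ⟨(le_of_mem_primesLE hp).trans_lt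
    ((nth_lt_nth infinite_setOfPred_prime).2 h), prime_of_mem_primesLE hp⟩

theorem Nat.card_primesBelow_nth_prime_sdiff_primesLE_nth_prime {i j : ℕ} (h : i < j) :
    #(primesBelow (nth Nat.Prime j) \ primesLE (nth Nat.Prime i)) = j - (i + 1) := by
  rw [card_sdiff_of_subset (primesLE_nth_prime_subset_primesBelow_nth_prime h),
    primesBelow_card_eq_primeCounting', primeCounting'_nth_eq, primesLE_card_eq_primeCounting,
    primeCounting_nth_prime]

theorem Nat.nth_prime_succ_le_of_lt {p j : ℕ} (hp : p.Prime) (h : nth Nat.Prime j < p) :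
    nth Nat.Prime (j + 1) ≤ p := by
  by_contra! h'
  exact (le_nth_of_lt_nth_succ h' hp).not_gt h

theorem Nat.Prime.mod_six {p : ℕ} (hp : p.Prime) (h5 : 5 ≤ p) : p % 6 = 1 ∨ p % 6 = 5 := by
  have h2 : ¬ 2 ∣ p := fun h => by have := (prime_dvd_prime_iff_eq prime_two hp).1 h; omega
  have h3 : ¬ 3 ∣ p := fun h => by have := (prime_dvd_prime_iff_eq prime_three hp).1 h; omega
  omega

theorem Nat.nth_prime_add_six_le {i : ℕ} (hi : 2 ≤ i) :
    nth Nat.Prime i + 6 ≤ nth Nat.Prime (i + 2) := by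
  have hmono : StrictMono (nth Nat.Prime) := nth_strictMono infinite_setOfPred_prime
  have h5 : 5 ≤ nth Nat.Prime i := nth_prime_two_eq_five ▸ hmono.monotone hi
  have h₀ := (prime_nth_prime i).mod_six h5
  have h₁ := (prime_nth_prime (i + 1)).mod_six (h5.trans (hmono (by omega)).le)
  have h₂ := (prime_nth_prime (i + 2)).mod_six (h5.trans (hmono (by omega)).le)
  have := hmono (show i < i + 1 by omega)
  have := hmono (show i + 1 < i + 2 by omega)
  omega

theorem Nat.three_mul_sub_two_le_nth_prime : ∀ m, 3 * m - 2 ≤ nth Nat.Prime m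
  | 0 => by simp
  | 1 => by simp [nth_prime_one_eq_three]
  | 2 => by simp [nth_prime_two_eq_five]
  | 3 => by simp [nth_prime_three_eq_seven]
  | m + 4 => by
    have := three_mul_sub_two_le_nth_prime (m + 2)
    have : nth Nat.Prime (m + 2) + 6 ≤ nth Nat.Prime (m + 4) := nth_prime_add_six_le (by omega)
    omega

theorem Nat.odd_nth_prime {m : ℕ} (hm : m ≠ 0) : Odd (nth Nat.Prime m) :=
  (prime_nth_prime m).odd_of_ne_two
    (nth_prime_zero_eq_two ▸ (nth_strictMono infinite_setOfPred_prime).injective.ne hm)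

theorem Nat.sq_add_one_le_two_pow {n : ℕ} (hn : 5 ≤ n) : n ^ 2 + 1 ≤ 2 ^ n := by
  induction n, hn using Nat.le_induction with
  | base => norm_num
  | succ n hn ih => rw [pow_succ 2 n]; nlinarith

theorem Nat.nth_prime_two_mul_add_one_le_sq (m : ℕ) :
    nth Nat.Prime (2 * m + 1) ≤ nth Nat.Prime (m + 1) ^ 2 := by
  rcases lt_or_ge m 2 with hm | hm
  · interval_cases m <;>
      simp [nth_prime_one_eq_three, nth_prime_two_eq_five, nth_prime_three_eq_seven]
  set x := nth Nat.Prime (m + 1)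
  have hx : 2 * m + 3 ≤ x := by have := three_mul_sub_two_le_nth_prime (m + 1); omega
  by_contra! hlt
  have hπ : π (x ^ 2) ≤ 2 * m + 1 := (count_le_iff_le_nth infinite_setOfPred_prime).2 hlt
  have h2x : x ^ 2 + 1 ≤ 2 ^ x := sq_add_one_le_two_pow (by omega)
  have hpow : 2 ^ x ^ 2 ≤ 2 ^ (x * (2 * m + 2)) := calc
    2 ^ x ^ 2 ≤ (x ^ 2 + 1) * (x ^ 2) ^ π (x ^ 2) := two_pow_le_succ_mul_pow_primeCounting _
    _ ≤ 2 ^ x * (2 ^ x) ^ (2 * m + 1) := by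
      refine Nat.mul_le_mul h2x ?_
      calc (x ^ 2) ^ π (x ^ 2) ≤ (x ^ 2) ^ (2 * m + 1) := Nat.pow_le_pow_right (by nlinarith) hπ
        _ ≤ (2 ^ x) ^ (2 * m + 1) := Nat.pow_le_pow_left (by omega) _
    _ = 2 ^ (x * (2 * m + 2)) := by rw [← pow_succ', ← pow_mul]
  have := (Nat.pow_le_pow_iff_right (by norm_num)).1 hpow
  nlinarith

theorem Nat.one_lt_of_nth_prime_lt_minFac {a j : ℕ} (h : nth Nat.Prime j < a.minFac) : 1 < a := by
  have := (prime_nth_prime j).two_le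
  by_contra! ha
  interval_cases a <;> simp at h <;> omega

theorem Nat.prime_of_lt_nth_prime_of_nth_prime_lt_minFac {a j : ℕ}
    (hlt : a < nth Nat.Prime (2 * j + 1)) (hmin : nth Nat.Prime j < a.minFac) : a.Prime := by
  by_contra hnp
  have ha1 := one_lt_of_nth_prime_lt_minFac hmin
  have hsucc := nth_prime_succ_le_of_lt (minFac_prime ha1.ne') hmin
  have := nth_prime_two_mul_add_one_le_sq j
  have := minFac_sq_le_self (by omega) hnp
  have := Nat.pow_le_pow_left hsucc 2
  omega

theorem Nat.card_le_card_of_pairwise_coprime {S T : Finset ℕ} (hS : (S : Set ℕ).Pairwise Coprime)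
    (h : ∀ a ∈ S, ∃ p ∈ T, p.Prime ∧ p ∣ a) : #S ≤ #T := by
  choose! f hfT hfp hfa using h
  refine card_le_card_of_injOn f hfT fun a ha b hb hab => ?_
  by_contra hne
  exact (hfp b hb).one_lt.ne' (eq_one_of_dvd_coprimes (hS ha hb hne) (hab ▸ hfa a ha) (hfa b hb))

theorem Finset.exists_subset_card_eq_of_mul_lt_card {α ι : Type*} [Fintype ι] [DecidableEq ι]
    (χ : α → ι) {F : Finset α} {k : ℕ} (hF : Fintype.card ι * (k - 1) < #F) :
    ∃ i, ∃ S ⊆ F, (∀ a ∈ S, χ a = i) ∧ #S = k := by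
  obtain ⟨i, -, hi⟩ := exists_lt_card_fiber_of_mul_lt_card_of_maps_to (t := univ)
    (fun a _ => mem_univ (χ a)) hF
  obtain ⟨S, hSF, hS⟩ := exists_subset_card_eq (show k ≤ #{a ∈ F | χ a = i} by omega)
  exact ⟨i, S, hSF.trans (filter_subset _ _), fun a ha => (mem_filter.1 (hSF ha)).2, hS⟩

theorem exists_monochromatic_pairwise_coprime (χ : ℕ → Fin 2) {k n : ℕ}
    (hn : nth Nat.Prime (2 * k - 3) ≤ n) :
    ∃ i, ∃ S : Finset ℕ, ↑S ⊆ Set.Icc 1 n ∧ (∀ a ∈ S, χ a = i) ∧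
      (S : Set ℕ).Pairwise Coprime ∧ #S = k := by
  set F := insert 1 (primesLE (nth Nat.Prime (2 * k - 3)))
  have hF : #F = 2 * k - 3 + 2 := by
    rw [card_insert_of_notMem fun h => (one_lt_of_mem_primesLE h).ne rfl,
      primesLE_card_eq_primeCounting, primeCounting_nth_prime]
  obtain ⟨i, S, hSF, hSi, hS⟩ := exists_subset_card_eq_of_mul_lt_card χ (F := F) (k := k)
    (by simp only [Fintype.card_fin]; omega)
  refine ⟨i, S, fun a ha => ?_, hSi, fun a ha b hb hab => ?_, hS⟩
  · rcases mem_insert.1 (hSF ha) with rfl | hp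
    · exact ⟨le_rfl, by have := (prime_nth_prime (2 * k - 3)).two_le; omega⟩
    · exact ⟨(prime_of_mem_primesLE hp).one_le, (le_of_mem_primesLE hp).trans hn⟩
  · rcases mem_insert.1 (hSF ha) with rfl | hpa
    · exact coprime_one_left b
    rcases mem_insert.1 (hSF hb) with rfl | hpb
    · exact coprime_one_right a
    exact (coprime_primes (prime_of_mem_primesLE hpa) (prime_of_mem_primesLE hpb)).2 hab

/-- With `j = k - 2`, color `0` is the side of `B₀ = {p₂, …, p_{k-1}}`: the odd numbers all of
whose prime factors are at most `p_{k-1}` (including `1`, since `minFac 1 = 1`), together with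
the `j` multiples `6, 12, …, 6j` of `3` moved over from the even numbers to balance the classes. -/
noncomputable def endpointColoring (j a : ℕ) : Fin 2 :=
  if Odd a ∧ a.minFac ≤ nth Nat.Prime j ∨ 6 ∣ a ∧ a ≤ 6 * j then 0 else 1

section endpointColoring

variable {j : ℕ}

theorem endpointColoring_eq_zero_iff {a : ℕ} :
    endpointColoring j a = 0 ↔ Odd a ∧ a.minFac ≤ nth Nat.Prime j ∨ 6 ∣ a ∧ a ≤ 6 * j := by
  unfold endpointColoring; split_ifs <;> simp_all

theorem endpointColoring_eq_one_iff {a : ℕ} :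
    endpointColoring j a = 1 ↔ ¬(Odd a ∧ a.minFac ≤ nth Nat.Prime j ∨ 6 ∣ a ∧ a ≤ 6 * j) := by
  unfold endpointColoring; split_ifs <;> simp_all

theorem card_le_of_endpointColoring_eq_zero {S : Finset ℕ} (h0 : 0 ∉ S)
    (hS : (S : Set ℕ).Pairwise Coprime) (hχ : ∀ a ∈ S, endpointColoring j a = 0) :
    #S ≤ j + 1 := by
  have hT : #((primesLE (nth Nat.Prime j)).erase 2) = j := by
    rw [card_erase_of_mem (mem_primesLE.2 ⟨(prime_nth_prime j).two_le, prime_two⟩),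
      primesLE_card_eq_primeCounting, primeCounting_nth_prime, Nat.add_sub_cancel]
  suffices #(S.erase 1) ≤ j by have := pred_card_le_card_erase (s := S) (a := 1); omega
  refine hT ▸ card_le_card_of_pairwise_coprime (hS.mono (coe_subset.2 (erase_subset _ _)))
    fun a ha => ?_
  obtain ⟨ha1, haS⟩ := mem_erase.1 ha
  have ha0 : a ≠ 0 := ne_of_mem_of_not_mem haS h0
  rcases endpointColoring_eq_zero_iff.1 (hχ a haS) with hodd | h6
  · refine ⟨a.minFac, mem_erase.2 ⟨fun h => ?_, mem_primesLE.2 ⟨hodd.2, minFac_prime ha1⟩⟩,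
      minFac_prime ha1, minFac_dvd a⟩
    exact hodd.1.not_two_dvd_nat (h ▸ minFac_dvd a)
  · have h3 : 3 ≤ nth Nat.Prime j := nth_prime_one_eq_three ▸
      (nth_le_nth infinite_setOfPred_prime).2 (by omega)
    exact ⟨3, mem_erase.2 ⟨by decide, mem_primesLE.2 ⟨h3, prime_three⟩⟩, prime_three,
      (by norm_num : 3 ∣ 6).trans h6.1⟩

theorem card_le_of_endpointColoring_eq_one {S : Finset ℕ}
    (hlt : ∀ a ∈ S, a < nth Nat.Prime (2 * j + 1))
    (hS : (S : Set ℕ).Pairwise Coprime) (hχ : ∀ a ∈ S, endpointColoring j a = 1) :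
    #S ≤ j + 1 := by
  have hT := card_insert_le 2
    (primesBelow (nth Nat.Prime (2 * j + 1)) \ primesLE (nth Nat.Prime j))
  rw [card_primesBelow_nth_prime_sdiff_primesLE_nth_prime (by omega)] at hT
  refine (card_le_card_of_pairwise_coprime hS fun a ha => ?_).trans (hT.trans (by omega))
  have hχa := endpointColoring_eq_one_iff.1 (hχ a ha)
  rcases even_or_odd a with heven | hodd
  · exact ⟨2, mem_insert_self _ _, prime_two, heven.two_dvd⟩
  have hmin : nth Nat.Prime j < a.minFac := by
    by_contra! h; exact hχa (Or.inl ⟨hodd, h⟩)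
  have ha1 : a ≠ 1 := (one_lt_of_nth_prime_lt_minFac hmin).ne'
  refine ⟨a.minFac, mem_insert_of_mem (mem_sdiff.2 ⟨mem_primesBelow.2 ⟨?_, minFac_prime ha1⟩,
    fun h => (le_of_mem_primesLE h).not_gt hmin⟩), minFac_prime ha1, minFac_dvd a⟩
  exact (minFac_le hodd.pos).trans_lt (hlt a ha)

theorem filter_endpointColoring_eq_one :
    {a ∈ Icc 1 (nth Nat.Prime (2 * j + 1) - 1) | endpointColoring j a = 1} =
      ({a ∈ Ioc 0 (nth Nat.Prime (2 * j + 1) - 1) | 2 ∣ a} \ {a ∈ Ioc 0 (6 * j) | 6 ∣ a}) ∪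
        (primesBelow (nth Nat.Prime (2 * j + 1)) \ primesLE (nth Nat.Prime j)) := by
  ext a
  simp only [mem_filter, mem_Icc, mem_union, mem_sdiff, mem_Ioc, mem_primesBelow, mem_primesLE,
    endpointColoring_eq_one_iff, not_or, not_and, not_le]
  constructor
  · rintro ⟨⟨ha1, haN⟩, hodd, h6⟩
    rcases even_or_odd a with he | ho
    · exact Or.inl ⟨⟨⟨ha1, haN⟩, he.two_dvd⟩, fun h h6' => by have := h6 h6'; omega⟩
    · have hmin := hodd ho
      have hp := prime_of_lt_nth_prime_of_nth_prime_lt_minFac (by omega) hmin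
      rw [hp.minFac_eq] at hmin
      exact Or.inr ⟨⟨by omega, hp⟩, fun h => by omega⟩
  · rintro (⟨⟨⟨ha0, haN⟩, h2⟩, h6⟩ | ⟨⟨haN, hp⟩, hq⟩)
    · refine ⟨⟨ha0, haN⟩, fun ho => absurd (even_iff_two_dvd.2 h2) (not_even_iff_odd.2 ho),
        fun h6' => ?_⟩
      by_contra! hle
      exact h6 ⟨ha0, hle⟩ h6'
    · have hqa : nth Nat.Prime j < a := by by_contra! h; exact hq h hp
      refine ⟨⟨hp.one_le, by omega⟩, fun _ => by rwa [hp.minFac_eq], fun h6 => ?_⟩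
      have := (prime_nth_prime j).two_le
      rcases hp.eq_one_or_self_of_dvd 2 (dvd_trans (by norm_num) h6) with h | h <;> omega

theorem card_filter_endpointColoring_eq_one :
    #{a ∈ Icc 1 (nth Nat.Prime (2 * j + 1) - 1) | endpointColoring j a = 1} =
      (nth Nat.Prime (2 * j + 1) - 1) / 2 := by
  set E := {a ∈ Ioc 0 (nth Nat.Prime (2 * j + 1) - 1) | 2 ∣ a}
  set M := {a ∈ Ioc 0 (6 * j) | 6 ∣ a}
  set P := primesBelow (nth Nat.Prime (2 * j + 1)) \ primesLE (nth Nat.Prime j)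
  have hN := three_mul_sub_two_le_nth_prime (2 * j + 1)
  have hME : M ⊆ E := fun a ha => by
    simp only [M, E, mem_filter, mem_Ioc] at ha ⊢
    exact ⟨⟨ha.1.1, by omega⟩, dvd_trans (by norm_num) ha.2⟩
  have hdisj : Disjoint (E \ M) P := by
    refine disjoint_left.2 fun a ha hp => ?_
    simp only [E, M, P, mem_sdiff, mem_filter, mem_Ioc, mem_primesBelow, mem_primesLE] at ha hp
    have := (prime_nth_prime j).two_le
    rcases hp.1.2.eq_one_or_self_of_dvd 2 ha.1.2 with h | h
    · omega
    · exact hp.2 ⟨by omega, hp.1.2⟩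
  have hM : #M ≤ #E := card_le_card hME
  rw [filter_endpointColoring_eq_one, card_union_of_disjoint hdisj, card_sdiff_of_subset hME,
    card_primesBelow_nth_prime_sdiff_primesLE_nth_prime (by omega)]
  simp only [E, M, Ioc_filter_dvd_card_eq_div] at hM ⊢
  omega

theorem card_filter_endpointColoring_eq_zero :
    #{a ∈ Icc 1 (nth Nat.Prime (2 * j + 1) - 1) | endpointColoring j a = 0} =
      (nth Nat.Prime (2 * j + 1) - 1) / 2 := by
  have hne : ∀ a, ¬endpointColoring j a = 0 ↔ endpointColoring j a = 1 := fun a => by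
    rw [endpointColoring_eq_zero_iff, endpointColoring_eq_one_iff]
  have hsplit := card_filter_add_card_filter_not (s := Icc 1 (nth Nat.Prime (2 * j + 1) - 1))
    (p := fun a => endpointColoring j a = 0)
  simp only [hne] at hsplit
  rw [card_filter_endpointColoring_eq_one, Nat.card_Icc] at hsplit
  obtain ⟨r, hr⟩ := odd_nth_prime (m := 2 * j + 1) (by omega)
  omega

end endpointColoring

/-- Exact balanced two-color endpoint: for `k ≥ 2`, the largest `n` admitting a
two-coloring of `{1,...,n}` with color classes differing in size by at most one
and no monochromatic set of `k` pairwise coprime integers is `p_{2k-2} - 1`. -/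
theorem balanced_two_color_endpoint (k : ℕ) (hk : 2 ≤ k) :
    IsGreatest {n : ℕ | ∃ χ : ℕ → Fin 2,
      ((((Finset.Icc 1 n).filter fun a => χ a = 0).card : ℤ) -
        (((Finset.Icc 1 n).filter fun a => χ a = 1).card : ℤ)).natAbs ≤ 1 ∧
      ∀ i : Fin 2, ¬ ∃ S : Finset ℕ, ↑S ⊆ Set.Icc 1 n ∧ (∀ a ∈ S, χ a = i) ∧
        (S : Set ℕ).Pairwise Nat.Coprime ∧ S.card = k}
    (Nat.nth Nat.Prime (2 * k - 3) - 1) := by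
  refine ⟨?_, fun n ⟨χ, _, hχ⟩ => ?_⟩
  · obtain ⟨j, rfl⟩ := Nat.exists_eq_add_of_le' hk
    rw [show 2 * (j + 2) - 3 = 2 * j + 1 by omega]
    refine ⟨endpointColoring j, ?_, fun i ⟨S, hSn, hSi, hS, hSk⟩ => ?_⟩
    · rw [card_filter_endpointColoring_eq_zero, card_filter_endpointColoring_eq_one, sub_self]
      exact zero_le_one
    have hSn' : ∀ a ∈ S, 1 ≤ a ∧ a ≤ nth Nat.Prime (2 * j + 1) - 1 := fun a ha => hSn ha
    have hq := (prime_nth_prime (2 * j + 1)).two_le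
    fin_cases i
    · have := card_le_of_endpointColoring_eq_zero (fun h => by have := hSn' 0 h; omega) hS hSi
      omega
    · have := card_le_of_endpointColoring_eq_one (fun a ha => by have := hSn' a ha; omega) hS hSi
      omega
  · by_contra! hn
    exact (exists_monochromatic_pairwise_coprime χ (by omega)).elim hχ
end

section
/- Let s,t ≥ 2. The largest n admitting a two-coloring of {1,...,n} with color classes differing by at most one, with no k-element pairwise coprime set in color 0 for k = s and none in color 1 for k = t, equals p_{s+t−2} − 1. -/
/-!
Write `p k` for `Nat.nth Nat.Prime k` (so `p 0 = 2`), `s = i + 2`, `t = j + 2` and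
`P = p (i + j + 1)`.

Upper bound: `1, p 0, …, p (i + j + 1)` are `s + t - 1` pairwise coprime numbers in `[1, P]`,
so every 2-colouring of `[1, n]` with `P ≤ n` has `s` of them in colour 0 or `t` of them in
colour 1.

Lower bound, for `j ≤ i` (the other case follows by swapping the colours): on `[1, P - 1]`
give colour 1 to the even numbers and to the `j` primes `p (i + 1), …, p (i + j)`, then move
`j` multiples of 6 back to colour 0 to balance the classes. Every colour-1 number is divisible
by one of the `j + 1` primes `2, p (i + 1), …, p (i + j)`. Every colour-0 number other than 1
is divisible by one of the `i` primes `p 1, …, p i`: an odd number below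
`P ≤ p (2 i + 1) ≤ p (i + 1) ^ 2` with no such factor is prime, hence one of
`p (i + 1), …, p (i + j)`. Pairwise coprime numbers have distinct prime factors, so neither
colour contains a forbidden set.

The two estimates on primes are `p (2 k + 1) ≤ p (k + 1) ^ 2`, from Chebyshev's bound
`2 ^ N ≤ (N + 1) * N ^ π N`, and `3 k ≤ p k + 2`, which leaves room for `j` multiples of 6.
-/

open Finset

namespace Nat

theorem two_pow_le_succ_mul_pow_primeCounting_s18 (N : ℕ) :
    2 ^ N ≤ (N + 1) * N ^ primeCounting N := by
  rcases eq_or_ne N 0 with rfl | hN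
  · simp
  calc 2 ^ N ≤ (N + 1) * lcmUpto N := Chebyshev.two_pow_le_mul_lcmUpto N
    _ ≤ (N + 1) * N ^ primeCounting N := by
      rw [lcmUpto_eq_prod_pow_log, ← primesLE_card_eq_primeCounting]
      gcongr
      exact prod_le_pow_card _ _ _ fun p _ => pow_log_le_self p hN

theorem pow_four_le_two_pow {n : ℕ} (hn : 16 ≤ n) : n ^ 4 ≤ 2 ^ n := by
  induction n, hn using le_induction with
  | base => norm_num
  | succ n hn ih =>
    have h1 : 16 * n ≤ n ^ 2 := by nlinarith
    have h2 : 16 * n ^ 2 ≤ n ^ 3 := by nlinarith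
    have h3 : 16 * n ^ 3 ≤ n ^ 4 := by nlinarith
    calc (n + 1) ^ 4 ≤ 2 * n ^ 4 := by nlinarith
      _ ≤ 2 ^ (n + 1) := by rw [pow_succ 2 n]; omega

theorem Prime.mod_six_eq_one_or_five {p : ℕ} (hp : p.Prime) (h5 : 5 ≤ p) :
    p % 6 = 1 ∨ p % 6 = 5 := by
  have h2 : ¬ 2 ∣ p := fun h => by have := (prime_dvd_prime_iff_eq prime_two hp).mp h; omega
  have h3 : ¬ 3 ∣ p := fun h => by have := (prime_dvd_prime_iff_eq prime_three hp).mp h; omega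
  omega

theorem prime_of_lt_sq_of_le_minFac {a q : ℕ} (ha : 1 < a) (hq : q ≤ a.minFac)
    (haq : a < q ^ 2) : a.Prime := by
  by_contra h
  have := minFac_sq_le_self (by omega) h
  have := Nat.pow_le_pow_left hq 2
  omega

theorem nth_prime_strictMono : StrictMono (nth Prime) :=
  nth_strictMono infinite_setOfPred_prime

theorem not_two_dvd_nth_prime {k : ℕ} (hk : 0 < k) : ¬ 2 ∣ nth Prime k := fun h => by
  have h2 := (prime_dvd_prime_iff_eq prime_two (prime_nth_prime k)).mp h
  have := nth_prime_strictMono hk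
  rw [← h2, nth_prime_zero_eq_two] at this
  exact lt_irrefl 2 this

theorem nth_prime_add_six_le_s18 {j : ℕ} (hj : 2 ≤ j) : nth Prime j + 6 ≤ nth Prime (j + 2) := by
  have hp : 5 ≤ nth Prime j := nth_prime_two_eq_five ▸ nth_prime_strictMono.monotone hj
  have hpq := nth_prime_strictMono (show j < j + 1 by omega)
  have hqr := nth_prime_strictMono (show j + 1 < j + 2 by omega)
  have := (prime_nth_prime j).mod_six_eq_one_or_five hp
  have := (prime_nth_prime (j + 1)).mod_six_eq_one_or_five (by omega)
  have := (prime_nth_prime (j + 2)).mod_six_eq_one_or_five (by omega)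
  -- one of `p, p + 2, p + 4` is divisible by 3
  omega

theorem three_mul_le_nth_prime_add_two (j : ℕ) : 3 * j ≤ nth Prime j + 2 := by
  induction j using Nat.strong_induction_on with
  | _ j ih =>
    match j, ih with
    | 0, _ | 1, _ | 2, _ | 3, _ => simp
    | j + 4, ih =>
      have h1 := ih (j + 2) (by omega)
      have h2 : nth Prime (j + 2) + 6 ≤ nth Prime (j + 4) := nth_prime_add_six_le_s18 (by omega)
      omega

theorem nth_prime_two_mul_add_one_le_sq_s18 (k : ℕ) :
    nth Prime (2 * k + 1) ≤ nth Prime (k + 1) ^ 2 := by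
  set Q := nth Prime (k + 1)
  have hkQ : k + 3 ≤ Q := add_two_le_nth_prime (k + 1)
  suffices 2 * k + 1 < count Prime (Q ^ 2 + 1) from Nat.lt_succ_iff.mp (nth_lt_of_lt_count this)
  rcases lt_or_ge k 5 with hk | hk
  · have : 2 * k + 1 < count Prime ((k + 3) ^ 2) := by interval_cases k <;> decide
    exact this.trans_le (count_monotone _ (by nlinarith))
  have hQ : 16 ≤ Q := by have := three_mul_le_nth_prime_add_two (k + 1); omega
  by_contra! hπ
  have : 2 ^ (Q ^ 2) < 2 ^ (Q ^ 2) := calc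
    2 ^ (Q ^ 2) ≤ (Q ^ 2 + 1) * (Q ^ 2) ^ primeCounting (Q ^ 2) :=
      two_pow_le_succ_mul_pow_primeCounting_s18 _
    _ ≤ Q ^ 4 * (Q ^ 2) ^ (2 * k + 1) := by
      gcongr
      · have : 2 ≤ Q ^ 2 := by nlinarith
        calc Q ^ 2 + 1 ≤ Q ^ 2 * Q ^ 2 := by nlinarith
          _ = Q ^ 4 := by ring
      · nlinarith
      · exact hπ
    _ = Q ^ (4 * k + 6) := by ring
    _ < Q ^ (4 * Q) := Nat.pow_lt_pow_right (by omega) (by omega)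
    _ = (Q ^ 4) ^ Q := by ring
    _ ≤ (2 ^ Q) ^ Q := Nat.pow_le_pow_left (pow_four_le_two_pow hQ) Q
    _ = 2 ^ (Q ^ 2) := by ring
  exact lt_irrefl _ this

theorem mem_image_nth_prime_Icc {q i j : ℕ} (hq : q.Prime) :
    q ∈ (Icc i j).image (nth Prime) ↔ nth Prime i ≤ q ∧ q ≤ nth Prime j := by
  constructor
  · intro h
    obtain ⟨c, hc, rfl⟩ := mem_image.mp h
    exact ⟨nth_prime_strictMono.monotone (mem_Icc.mp hc).1,
      nth_prime_strictMono.monotone (mem_Icc.mp hc).2⟩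
  · rintro ⟨hi, hj⟩
    rw [← nth_count hq] at hi hj ⊢
    exact mem_image_of_mem _ (mem_Icc.mpr ⟨nth_prime_strictMono.le_iff_le.mp hi,
      nth_prime_strictMono.le_iff_le.mp hj⟩)

theorem card_image_nth_prime_Icc (i j : ℕ) :
    ((Icc i j).image (nth Prime)).card = j + 1 - i := by
  rw [Finset.card_image_of_injective _ nth_prime_strictMono.injective, Nat.card_Icc]

theorem minFac_mem_image_nth_prime_Icc {a i m : ℕ} (hm : m ≤ 2 * i) (ha : 1 < a)
    (ha2 : ¬ 2 ∣ a) (haP : a < nth Prime (m + 1))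
    (haR : a ∉ (Icc (i + 1) m).image (nth Prime)) :
    a.minFac ∈ (Icc 1 i).image (nth Prime) := by
  have hq := minFac_prime ha.ne'
  rw [mem_image_nth_prime_Icc hq, nth_prime_one_eq_three]
  refine ⟨?_, ?_⟩
  · have : a.minFac ≠ 2 := fun h => ha2 (h ▸ minFac_dvd a)
    have := hq.two_le
    omega
  by_contra! hlt
  have hnext : nth Prime (i + 1) ≤ a.minFac :=
    not_lt.mp fun h => (le_nth_of_lt_nth_succ h hq).not_gt hlt
  have haprime : a.Prime := by
    refine prime_of_lt_sq_of_le_minFac ha hnext (haP.trans_le ?_)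
    calc nth Prime (m + 1) ≤ nth Prime (2 * i + 1) := nth_prime_strictMono.monotone (by omega)
      _ ≤ nth Prime (i + 1) ^ 2 := nth_prime_two_mul_add_one_le_sq_s18 i
  rw [haprime.minFac_eq] at hnext
  exact haR ((mem_image_nth_prime_Icc haprime).mpr ⟨hnext, le_nth_of_lt_nth_succ haP haprime⟩)

theorem card_le_card_of_pairwise_coprime_s18 {S T : Finset ℕ} (hS : (S : Set ℕ).Pairwise Coprime)
    (hT : ∀ a ∈ S, ∃ p ∈ T, p.Prime ∧ p ∣ a) : S.card ≤ T.card := by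
  choose! f hfT hfp hfa using hT
  refine card_le_card_of_injOn f hfT fun a ha b hb hab => ?_
  by_contra hne
  exact not_coprime_of_dvd_of_dvd (hfp a ha).one_lt (hfa a ha) (hab ▸ hfa b hb) (hS ha hb hne)

end Nat

def HasColoredCoprimeSet (χ : ℕ → Fin 2) (c : Fin 2) (n k : ℕ) : Prop :=
  ∃ S : Finset ℕ, ↑S ⊆ Set.Icc 1 n ∧ (∀ a ∈ S, χ a = c) ∧
    (S : Set ℕ).Pairwise Nat.Coprime ∧ S.card = k

def IsAdmissibleColoring (s t n : ℕ) (χ : ℕ → Fin 2) : Prop :=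
  ((((Icc 1 n).filter fun a => χ a = 0).card : ℤ) -
      (((Icc 1 n).filter fun a => χ a = 1).card : ℤ)).natAbs ≤ 1 ∧
    ¬ HasColoredCoprimeSet χ 0 n s ∧ ¬ HasColoredCoprimeSet χ 1 n t

theorem card_filter_eq_zero_add_card_filter_eq_one {α : Type*} (C : Finset α)
    (χ : α → Fin 2) :
    (C.filter (χ · = 0)).card + (C.filter (χ · = 1)).card = C.card := by
  rw [← card_filter_add_card_filter_not (s := C) (fun a => χ a = 0)]
  congr 1
  exact congrArg card (filter_congr fun a _ => by omega)

theorem hasColoredCoprimeSet_of_le_card {χ : ℕ → Fin 2} {c : Fin 2} {n k : ℕ}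
    {C : Finset ℕ} (hC : ↑C ⊆ Set.Icc 1 n) (hcop : (C : Set ℕ).Pairwise Nat.Coprime)
    (hk : k ≤ (C.filter (χ · = c)).card) : HasColoredCoprimeSet χ c n k := by
  obtain ⟨S, hSC, rfl⟩ := exists_subset_card_eq hk
  have hSC' : S ⊆ C := hSC.trans (filter_subset _ _)
  exact ⟨S, (coe_subset.mpr hSC').trans hC, fun a ha => (mem_filter.mp (hSC ha)).2,
    hcop.mono (coe_subset.mpr hSC'), rfl⟩

theorem hasColoredCoprimeSet_rev_comp {χ : ℕ → Fin 2} {c : Fin 2} {n k : ℕ} :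
    HasColoredCoprimeSet (Fin.rev ∘ χ) c n k ↔ HasColoredCoprimeSet χ c.rev n k := by
  simp only [HasColoredCoprimeSet, Function.comp_apply, Fin.rev_eq_iff]

theorem IsAdmissibleColoring.rev_comp {s t n : ℕ} {χ : ℕ → Fin 2}
    (h : IsAdmissibleColoring s t n χ) : IsAdmissibleColoring t s n (Fin.rev ∘ χ) := by
  obtain ⟨hbal, h0, h1⟩ := h
  refine ⟨?_, by simpa [hasColoredCoprimeSet_rev_comp] using h1,
    by simpa [hasColoredCoprimeSet_rev_comp] using h0⟩
  simp only [Function.comp_apply, Fin.rev_eq_iff]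
  rw [← Int.natAbs_neg, neg_sub]
  simpa using hbal

theorem lt_nth_prime_of_not_hasColoredCoprimeSet {χ : ℕ → Fin 2} {n i j : ℕ}
    (h0 : ¬ HasColoredCoprimeSet χ 0 n (i + 2)) (h1 : ¬ HasColoredCoprimeSet χ 1 n (j + 2)) :
    n < Nat.nth Nat.Prime (i + j + 1) := by
  by_contra! hn
  set C := insert 1 ((range (i + j + 2)).image (Nat.nth Nat.Prime))
  have hprime : ∀ a ∈ (range (i + j + 2)).image (Nat.nth Nat.Prime), a.Prime ∧ a ≤ n := by
    simp only [mem_image, mem_range]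
    rintro _ ⟨k, hk, rfl⟩
    exact ⟨Nat.prime_nth_prime k, (Nat.nth_prime_strictMono.monotone (by omega)).trans hn⟩
  have hCcard : C.card = i + j + 3 := by
    rw [card_insert_of_notMem fun h => Nat.not_prime_one (hprime 1 h).1,
      card_image_of_injective _ Nat.nth_prime_strictMono.injective, card_range]
  have hCn : ↑C ⊆ Set.Icc 1 n := by
    intro a ha
    rcases mem_insert.mp ha with rfl | ha
    · exact ⟨le_rfl, (Nat.prime_nth_prime _).one_lt.le.trans hn⟩
    · exact ⟨(hprime a ha).1.one_lt.le, (hprime a ha).2⟩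
  have hCcop : (C : Set ℕ).Pairwise Nat.Coprime := by
    intro a ha b hb hab
    rcases mem_insert.mp ha with rfl | ha
    · exact Nat.coprime_one_left b
    rcases mem_insert.mp hb with rfl | hb
    · exact Nat.coprime_one_right a
    exact (Nat.coprime_primes (hprime a ha).1 (hprime b hb).1).mpr hab
  have := card_filter_eq_zero_add_card_filter_eq_one C χ
  rcases (by omega :
      i + 2 ≤ (C.filter (χ · = 0)).card ∨ j + 2 ≤ (C.filter (χ · = 1)).card) with h | h
  · exact h0 (hasColoredCoprimeSet_of_le_card hCn hCcop h)
  · exact h1 (hasColoredCoprimeSet_of_le_card hCn hCcop h)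

def splitColoring (R F : Finset ℕ) (a : ℕ) : Fin 2 :=
  if 2 ∣ a ∧ a ∉ F ∨ a ∈ R then 1 else 0

theorem splitColoring_eq_one_iff {R F : Finset ℕ} {a : ℕ} :
    splitColoring R F a = 1 ↔ 2 ∣ a ∧ a ∉ F ∨ a ∈ R := by
  unfold splitColoring
  split_ifs with h <;> simp [h]

theorem splitColoring_eq_zero_iff {R F : Finset ℕ} {a : ℕ} :
    splitColoring R F a = 0 ↔ ¬ (2 ∣ a ∧ a ∉ F ∨ a ∈ R) := by
  rw [← splitColoring_eq_one_iff]
  omega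

theorem card_filter_splitColoring_eq_one {R F : Finset ℕ} {n : ℕ}
    (hF : F ⊆ (Icc 1 n).filter (2 ∣ ·)) (hR : R ⊆ (Icc 1 n).filter (¬ 2 ∣ ·))
    (hRF : R.card = F.card) :
    ((Icc 1 n).filter (splitColoring R F · = 1)).card = n / 2 := by
  have hR' : ∀ a ∈ R, a ∈ Icc 1 n ∧ ¬ 2 ∣ a := fun a ha => mem_filter.mp (hR ha)
  have hsplit :
      (Icc 1 n).filter (splitColoring R F · = 1) = ((Icc 1 n).filter (2 ∣ ·) \ F) ∪ R := by
    ext a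
    simp only [mem_filter, mem_union, mem_sdiff, splitColoring_eq_one_iff]
    constructor
    · rintro ⟨ha, ⟨h2, hF⟩ | hR⟩
      · exact Or.inl ⟨⟨ha, h2⟩, hF⟩
      · exact Or.inr hR
    · rintro (⟨⟨ha, h2⟩, hF⟩ | hR)
      · exact ⟨ha, Or.inl ⟨h2, hF⟩⟩
      · exact ⟨(hR' a hR).1, Or.inr hR⟩
  have hdisj : Disjoint ((Icc 1 n).filter (2 ∣ ·) \ F) R :=
    disjoint_left.mpr fun a ha haR => (hR' a haR).2 (mem_filter.mp (mem_sdiff.mp ha).1).2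
  have hevens : ((Icc 1 n).filter (2 ∣ ·)).card = n / 2 := Nat.Ioc_filter_dvd_card_eq_div n 2
  rw [hsplit, card_union_of_disjoint hdisj, card_sdiff_of_subset hF, hevens, hRF]
  have := card_le_card hF
  omega

theorem not_hasColoredCoprimeSet_splitColoring_one {R F : Finset ℕ} {n : ℕ}
    (hR : ∀ p ∈ R, p.Prime) : ¬ HasColoredCoprimeSet (splitColoring R F) 1 n (R.card + 2) := by
  rintro ⟨S, -, hcol, hcop, hcard⟩
  have hST : S.card ≤ (insert 2 R).card := by
    refine Nat.card_le_card_of_pairwise_coprime_s18 hcop fun a ha => ?_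
    rcases splitColoring_eq_one_iff.mp (hcol a ha) with ⟨h2, -⟩ | haR
    · exact ⟨2, mem_insert_self _ _, Nat.prime_two, h2⟩
    · exact ⟨a, mem_insert_of_mem haR, hR a haR, dvd_rfl⟩
  have := card_insert_le 2 R
  omega

theorem not_hasColoredCoprimeSet_splitColoring_zero {i j : ℕ} (hji : j ≤ i) {F : Finset ℕ}
    (hF : ∀ a ∈ F, 3 ∣ a) (hFj : F.card ≤ j) :
    ¬ HasColoredCoprimeSet (splitColoring ((Icc (i + 1) (i + j)).image (Nat.nth Nat.Prime)) F) 0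
      (Nat.nth Nat.Prime (i + j + 1) - 1) (i + 2) := by
  rintro ⟨S, hS, hcol, hcop, hcard⟩
  have hST : (S.erase 1).card ≤ ((Icc 1 i).image (Nat.nth Nat.Prime)).card := by
    refine Nat.card_le_card_of_pairwise_coprime_s18 (hcop.mono (coe_subset.mpr (erase_subset _ _)))
      fun a ha => ?_
    obtain ⟨ha1, haS⟩ := mem_erase.mp ha
    obtain ⟨ha0, han⟩ := hS haS
    have hcolor := splitColoring_eq_zero_iff.mp (hcol a haS)
    by_cases haF : a ∈ F
    · have : 0 < F.card := card_pos.mpr ⟨a, haF⟩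
      refine ⟨3, ?_, Nat.prime_three, hF a haF⟩
      rw [Nat.mem_image_nth_prime_Icc Nat.prime_three, Nat.nth_prime_one_eq_three,
        ← Nat.nth_prime_one_eq_three]
      exact ⟨le_rfl, Nat.nth_prime_strictMono.monotone (by omega)⟩
    · refine ⟨a.minFac, Nat.minFac_mem_image_nth_prime_Icc (by omega) (by omega)
        (fun h2 => hcolor (Or.inl ⟨h2, haF⟩)) ?_ fun haR => hcolor (Or.inr haR),
        Nat.minFac_prime ha1, Nat.minFac_dvd a⟩
      have := (Nat.prime_nth_prime (i + j + 1)).one_lt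
      omega
  have := pred_card_le_card_erase (s := S) (a := 1)
  rw [Nat.card_image_nth_prime_Icc] at hST
  omega

theorem exists_isAdmissibleColoring {i j : ℕ} (hji : j ≤ i) :
    ∃ χ, IsAdmissibleColoring (i + 2) (j + 2) (Nat.nth Nat.Prime (i + j + 1) - 1) χ := by
  set P := Nat.nth Nat.Prime (i + j + 1)
  set R := (Icc (i + 1) (i + j)).image (Nat.nth Nat.Prime)
  have hP6 : 6 * j + 1 ≤ P := by
    have := Nat.three_mul_le_nth_prime_add_two (2 * j + 1)
    have : Nat.nth Nat.Prime (2 * j + 1) ≤ P := Nat.nth_prime_strictMono.monotone (by omega)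
    omega
  have hPodd : ¬ 2 ∣ P := Nat.not_two_dvd_nth_prime (by omega)
  have hsixes : ((Icc 1 (P - 1)).filter (6 ∣ ·)).card = (P - 1) / 6 :=
    Nat.Ioc_filter_dvd_card_eq_div _ _
  obtain ⟨F, hF6, hFcard⟩ :=
    exists_subset_card_eq (s := (Icc 1 (P - 1)).filter (6 ∣ ·)) (n := j) (by omega)
  have hR : R ⊆ (Icc 1 (P - 1)).filter (¬ 2 ∣ ·) := by
    intro q hq
    obtain ⟨k, hk, rfl⟩ := mem_image.mp hq
    have hk := mem_Icc.mp hk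
    exact mem_filter.mpr ⟨mem_Icc.mpr ⟨(Nat.prime_nth_prime k).one_lt.le,
      Nat.le_sub_one_of_lt (Nat.nth_prime_strictMono (by omega))⟩,
      Nat.not_two_dvd_nth_prime (by omega)⟩
  have hRcard : R.card = j := by rw [Nat.card_image_nth_prime_Icc]; omega
  have hcard1 := card_filter_splitColoring_eq_one (hF6.trans (monotone_filter_right _
    fun _ _ h => dvd_trans (by norm_num) h)) hR (hRcard.trans hFcard.symm)
  have hcard := card_filter_eq_zero_add_card_filter_eq_one (Icc 1 (P - 1)) (splitColoring R F)
  rw [Nat.card_Icc] at hcard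
  refine ⟨splitColoring R F, by omega,
    not_hasColoredCoprimeSet_splitColoring_zero hji
      (fun a ha => dvd_trans (by norm_num) (mem_filter.mp (hF6 ha)).2) hFcard.le,
    hRcard ▸ not_hasColoredCoprimeSet_splitColoring_one fun q hq => ?_⟩
  obtain ⟨k, -, rfl⟩ := mem_image.mp hq
  exact Nat.prime_nth_prime k

/-- Off-diagonal balanced endpoint: for `s, t ≥ 2`, the largest `n` admitting a
near-balanced two-coloring of `{1,...,n}` with no `s`-element pairwise coprime set
in color 0 and no `t`-element pairwise coprime set in color 1 is `p_{s+t-2} - 1`. -/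
theorem balanced_off_diagonal_endpoint (s t : ℕ) (hs : 2 ≤ s) (ht : 2 ≤ t) :
    IsGreatest {n : ℕ | ∃ χ : ℕ → Fin 2,
      ((((Finset.Icc 1 n).filter fun a => χ a = 0).card : ℤ) -
        (((Finset.Icc 1 n).filter fun a => χ a = 1).card : ℤ)).natAbs ≤ 1 ∧
      (¬ ∃ S : Finset ℕ, ↑S ⊆ Set.Icc 1 n ∧ (∀ a ∈ S, χ a = 0) ∧
        (S : Set ℕ).Pairwise Nat.Coprime ∧ S.card = s) ∧
      ¬ ∃ S : Finset ℕ, ↑S ⊆ Set.Icc 1 n ∧ (∀ a ∈ S, χ a = 1) ∧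
        (S : Set ℕ).Pairwise Nat.Coprime ∧ S.card = t}
    (Nat.nth Nat.Prime (s + t - 3) - 1) := by
  obtain ⟨i, rfl⟩ := Nat.exists_eq_add_of_le' hs
  obtain ⟨j, rfl⟩ := Nat.exists_eq_add_of_le' ht
  rw [show i + 2 + (j + 2) - 3 = i + j + 1 by omega]
  refine ⟨?_, fun n ⟨χ, _, h0, h1⟩ =>
    Nat.le_sub_one_of_lt (lt_nth_prime_of_not_hasColoredCoprimeSet h0 h1)⟩
  rcases le_total j i with hji | hij
  · exact exists_isAdmissibleColoring hji
  · obtain ⟨χ, hχ⟩ := exists_isAdmissibleColoring hij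
    rw [add_comm j i] at hχ
    exact ⟨_, hχ.rev_comp⟩
end
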